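/- arXiv:2109.08251 — 3 statements merged into one kernel-verified Lean document; each statement's English description precedes it below -/
import Mathlib

section
/- Let 1 ≤ m ≤ n. For single-column tableaux T, T' in the type A_n crystal B_{(1^m)}^n, one has T ≤ T' in the crystal order if and only if T(i,1) ≤ T'(i,1) for every i ∈ {1,…,m}. Consequently, the map sending T to the tuple (T(m,1)−m, …, T(2,1)−2, T(1,1)−1) is an order isomorphism from B_{(1^m)}^n onto the set of partitions fitting inside an m × (n+1−m) box ordered by containment; in particular, B_{(1^m)}^n is order-isomorphic to the distributive lattice of order ideals of the product of chains [m] × [n+1−m]. -/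
/-- A semistandard Young tableau of shape `lam` (rows indexed from `1`; `lam i` is the
length of row `i`) with entries in `{1, …, n+1}`.  Entries outside the shape are `0`. -/
structure Tableau (n : ℕ) (lam : ℕ → ℕ) where
  entry : ℕ → ℕ → ℕ
  entry_pos : ∀ i j, 1 ≤ i → 1 ≤ j → j ≤ lam i → 1 ≤ entry i j
  entry_le : ∀ i j, 1 ≤ i → 1 ≤ j → j ≤ lam i → entry i j ≤ n + 1
  row_weak : ∀ i j, 1 ≤ i → 1 ≤ j → j + 1 ≤ lam i → entry i j ≤ entry i (j + 1)
  col_strict : ∀ i j, 1 ≤ i → 1 ≤ j → j ≤ lam i → j ≤ lam (i + 1) →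
    entry i j < entry (i + 1) j
  zero_outside : ∀ i j, i = 0 ∨ j = 0 ∨ lam i < j → entry i j = 0

/-- The reading word of `T` (rows read from bottom to top, each row left to right),
with each letter recorded together with the cell it comes from. -/
def readingList (n : ℕ) (lam : ℕ → ℕ) (T : Tableau n lam) : List ((ℕ × ℕ) × ℕ) :=
  ((List.range n).map fun k =>
    (List.range (lam (n - k))).map fun j => ((n - k, j + 1), T.entry (n - k) (j + 1))).flatten

/-- The reading word of `T`. -/
def word (n : ℕ) (lam : ℕ → ℕ) (T : Tableau n lam) : List ℕ :=
  (readingList n lam T).map Prod.snd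

/-- The contiguous segment `w[a..b]` (inclusive, `0`-indexed) of the list `w`. -/
def seg (w : List ℕ) (a b : ℕ) : List ℕ := (w.drop a).take (b + 1 - a)

/-- Viewing each letter `i` of `w` as `)` and each letter `i+1` as `(` (ignoring all
other letters), the `)` in position `p` is unmatched.  This holds exactly when the
letter at position `p` is `i` and every segment of `w` ending at position `p` contains
strictly more `i`'s than `(i+1)`'s. -/
def UnmatchedClose (i : ℕ) (w : List ℕ) (p : ℕ) : Prop :=
  w[p]? = some i ∧ ∀ j, j ≤ p → (seg w j p).count (i + 1) < (seg w j p).count i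

/-- `FRel n lam i T T'` says that `F i T ≠ 0` and `T' = F i T`; that is, `T'` is obtained
from `T` by changing to `i+1` the entry `i` corresponding to the rightmost unmatched `)`
in the reading word of `T`. -/
def FRel (n : ℕ) (lam : ℕ → ℕ) (i : ℕ) (T T' : Tableau n lam) : Prop :=
  ∃ p : ℕ, UnmatchedClose i (word n lam T) p ∧
    (∀ q, p < q → ¬ UnmatchedClose i (word n lam T) q) ∧
    ∃ r c : ℕ, (readingList n lam T)[p]? = some ((r, c), i) ∧
      ∀ r' c' : ℕ, T'.entry r' c' = if r' = r ∧ c' = c then i + 1 else T.entry r' c'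

/-- The cover relation of the crystal order: `T ⋖ F i T` whenever `F i T ≠ 0`. -/
def CrystalCover (n : ℕ) (lam : ℕ → ℕ) (T T' : Tableau n lam) : Prop :=
  ∃ i, 1 ≤ i ∧ i ≤ n ∧ FRel n lam i T T'

/-- The crystal order on `B_λ^n`: the reflexive-transitive closure of the relations
`T < F i T`. -/
def CrystalLE (n : ℕ) (lam : ℕ → ℕ) : Tableau n lam → Tableau n lam → Prop :=
  Relation.ReflTransGen (CrystalCover n lam)

/-- `B_λ^n` is a lattice: every pair of tableaux has a greatest lower bound and a least
upper bound with respect to the crystal order. -/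
def IsCrystalLattice (n : ℕ) (lam : ℕ → ℕ) : Prop :=
  ∀ T₁ T₂ : Tableau n lam,
    (∃ M, CrystalLE n lam M T₁ ∧ CrystalLE n lam M T₂ ∧
      ∀ X, CrystalLE n lam X T₁ → CrystalLE n lam X T₂ → CrystalLE n lam X M) ∧
    (∃ J, CrystalLE n lam T₁ J ∧ CrystalLE n lam T₂ J ∧
      ∀ X, CrystalLE n lam T₁ X → CrystalLE n lam T₂ X → CrystalLE n lam J X)

/-- The single-column shape `(1^m)`. -/
def colShape (m : ℕ) : ℕ → ℕ := fun i => if 1 ≤ i ∧ i ≤ m then 1 else 0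

section Aux

theorem tab_ext {n : ℕ} {lam : ℕ → ℕ} {T T' : Tableau n lam}
    (h : ∀ i j, T.entry i j = T'.entry i j) : T = T' := by
  cases T; cases T'; simp only [Tableau.mk.injEq]; funext i j; exact h i j

theorem colShape_eq_one {m i : ℕ} (h1 : 1 ≤ i) (h2 : i ≤ m) : colShape m i = 1 := by
  simp [colShape, h1, h2]

theorem colShape_eq_zero {m i : ℕ} (h : ¬ (1 ≤ i ∧ i ≤ m)) : colShape m i = 0 := by
  unfold colShape; rw [if_neg h]

theorem col_ext {n m : ℕ} {T T' : Tableau n (colShape m)}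
    (h : ∀ i, 1 ≤ i → i ≤ m → T.entry i 1 = T'.entry i 1) : T = T' := by
  apply tab_ext
  intro i j
  by_cases hc : 1 ≤ i ∧ i ≤ m ∧ j = 1
  · obtain ⟨h1, h2, rfl⟩ := hc; exact h i h1 h2
  · have hz : i = 0 ∨ j = 0 ∨ colShape m i < j := by
      rcases Nat.eq_zero_or_pos j with hj0 | hj0
      · right; left; exact hj0
      by_cases h1 : 1 ≤ i ∧ i ≤ m
      · have hj : j ≠ 1 := fun hj => hc ⟨h1.1, h1.2, hj⟩
        right; right; rw [colShape_eq_one h1.1 h1.2]; omega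
      · rcases Nat.eq_zero_or_pos i with hi | hi
        · left; exact hi
        · rcases Nat.eq_zero_or_pos j with hj | hj
          · right; left; exact hj
          · right; right; rw [colShape_eq_zero h1]; omega
    rw [T.zero_outside i j hz, T'.zero_outside i j hz]

/-- strict monotonicity along the column with gap -/
theorem col_mono {n m : ℕ} (T : Tableau n (colShape m)) :
    ∀ b a, 1 ≤ a → a ≤ b → b ≤ m → T.entry a 1 + (b - a) ≤ T.entry b 1 := by
  intro b
  induction b with
  | zero => intro a h1 h2 h3; omega
  | succ b ih =>
    intro a h1 h2 h3
    rcases Nat.lt_or_ge a (b+1) with hab | hab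
    · have hb1 : 1 ≤ b := by omega
      have step : T.entry b 1 < T.entry (b+1) 1 := by
        apply T.col_strict b 1 hb1 le_rfl
        · rw [colShape_eq_one hb1 (by omega)]
        · rw [colShape_eq_one (by omega) h3]
      have := ih a h1 (by omega) (by omega)
      omega
    · have : a = b + 1 := by omega
      subst this; omega

theorem col_ge {n m : ℕ} (T : Tableau n (colShape m)) {a : ℕ} (h1 : 1 ≤ a) (h2 : a ≤ m) :
    a ≤ T.entry a 1 := by
  have := col_mono T a 1 le_rfl h1 h2
  have := T.entry_pos 1 1 le_rfl le_rfl (by rw [colShape_eq_one le_rfl (by omega)])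
  omega

theorem col_le {n m : ℕ} (T : Tableau n (colShape m)) {a : ℕ} (h1 : 1 ≤ a) (h2 : a ≤ m) :
    T.entry a 1 + (m - a) ≤ n + 1 := by
  have := col_mono T m a h1 h2 le_rfl
  have := T.entry_le m 1 (by omega) le_rfl (by rw [colShape_eq_one (by omega) le_rfl])
  omega

theorem flatten_map_singleton {α β : Type*} (l : List α) (f : α → β) :
    (l.map fun x => [f x]).flatten = l.map f := by
  induction l with
  | nil => rfl
  | cons x xs ih => simp [ih]

theorem readingList_col {n m : ℕ} (hm : 1 ≤ m) (hmn : m ≤ n) (T : Tableau n (colShape m)) :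
    readingList n (colShape m) T
      = (List.range m).map (fun p => ((m - p, 1), T.entry (m - p) 1)) := by
  unfold readingList
  have hr : List.range n = List.range (n-m) ++ (List.range m).map ((n-m) + ·) := by
    rw [← List.range_add]; congr 1; omega
  rw [hr, List.map_append, List.flatten_append]
  have h1 : ((List.range (n - m)).map fun k =>
      (List.range (colShape m (n - k))).map
        fun j => ((n - k, j + 1), T.entry (n - k) (j + 1))).flatten = [] := by
    apply List.flatten_eq_nil_iff.mpr
    intro l hl
    simp only [List.mem_map, List.mem_range] at hl
    obtain ⟨k, hk, rfl⟩ := hl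
    rw [colShape_eq_zero (by omega)]
    rfl
  rw [h1, List.nil_append, List.map_map]
  have h2 : ∀ p ∈ List.range m,
      ((fun k => (List.range (colShape m (n - k))).map
        fun j => ((n - k, j + 1), T.entry (n - k) (j + 1))) ∘ (fun x => (n-m) + x)) p
      = [((m - p, 1), T.entry (m - p) 1)] := by
    intro p hp
    simp only [List.mem_range] at hp
    simp only [Function.comp]
    have he : n - ((n-m) + p) = m - p := by omega
    rw [he, colShape_eq_one (by omega) (by omega)]
    rfl
  rw [List.map_congr_left h2, flatten_map_singleton]

theorem word_col {n m : ℕ} (hm : 1 ≤ m) (hmn : m ≤ n) (T : Tableau n (colShape m)) :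
    word n (colShape m) T = (List.range m).map (fun p => T.entry (m - p) 1) := by
  unfold word
  rw [readingList_col hm hmn T, List.map_map]
  rfl

end Aux

section Aux2

theorem seg_count_zero {w : List ℕ} {x : ℕ} (hx : x ∉ w) (a b : ℕ) :
    (seg w a b).count x = 0 := by
  apply List.count_eq_zero_of_not_mem
  intro hmem
  exact hx (((List.take_sublist _ _).trans (List.drop_sublist _ _)).mem hmem)

theorem seg_count_pos {w : List ℕ} {x : ℕ} {p : ℕ} (hp : p < w.length)
    (hx : w[p] = x) {a : ℕ} (ha : a ≤ p) : 0 < (seg w a p).count x := by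
  apply List.count_pos_iff.mpr
  have hlen : p - a < (seg w a p).length := by
    simp only [seg, List.length_take, List.length_drop]
    omega
  have : (seg w a p)[p - a] = x := by
    simp only [seg]
    rw [List.getElem_take, List.getElem_drop]
    simp only [show a + (p - a) = p from by omega, hx]
  rw [← this]
  exact List.getElem_mem hlen

/-- Construction of the FRel witness for columns. -/
theorem frel_col {n m : ℕ} (hm : 1 ≤ m) (hmn : m ≤ n) (T U : Tableau n (colShape m))
    (r : ℕ) (hr1 : 1 ≤ r) (hrm : r ≤ m)
    (hne : ∀ s, 1 ≤ s → s ≤ m → T.entry s 1 ≠ T.entry r 1 + 1)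
    (hU : ∀ r' c', U.entry r' c' = if r' = r ∧ c' = 1 then T.entry r 1 + 1 else T.entry r' c') :
    FRel n (colShape m) (T.entry r 1) T U := by
  have hw := word_col hm hmn T
  have hrl := readingList_col hm hmn T
  set i := T.entry r 1 with hi
  have hlen : (word n (colShape m) T).length = m := by rw [hw]; simp
  have hget : ∀ p, p < m → (word n (colShape m) T)[p]? = some (T.entry (m - p) 1) := by
    intro p hp
    rw [hw, List.getElem?_map, List.getElem?_range hp]
    rfl
  have hnotmem : (i + 1) ∉ word n (colShape m) T := by
    rw [hw]
    intro hmem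
    simp only [List.mem_map, List.mem_range] at hmem
    obtain ⟨p, hp, hval⟩ := hmem
    exact hne (m - p) (by omega) (by omega) hval
  refine ⟨m - r, ⟨?_, ?_⟩, ?_, r, 1, ?_, ?_⟩
  · rw [hget (m - r) (by omega), show m - (m - r) = r by omega]
  · intro j hj
    rw [seg_count_zero hnotmem]
    apply seg_count_pos (by omega)
    · have := hget (m - r) (by omega)
      rw [List.getElem?_eq_getElem (by omega)] at this
      have := Option.some.inj this
      rw [this, show m - (m - r) = r by omega]
    · exact hj
  · intro q hq hun
    rcases Nat.lt_or_ge q m with hqm | hqm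
    · have h1 := hun.1
      rw [hget q hqm] at h1
      have h2 := Option.some.inj h1
      -- T.entry (m - q) 1 = i = T.entry r 1, but m - q < r
      have hlt : T.entry (m - q) 1 + (r - (m - q)) ≤ T.entry r 1 :=
        col_mono T r (m - q) (by omega) (by omega) hrm
      omega
    · have h1 := hun.1
      rw [List.getElem?_eq_none (by omega)] at h1
      cases h1
  · rw [hrl, List.getElem?_map, List.getElem?_range (by omega)]
    simp only [Option.map_some]
    rw [show m - (m - r) = r by omega]
  · intro r' c'
    exact hU r' c'

/-- Each cover step weakly increases all column entries. -/
theorem cover_mono {n m : ℕ} (hm : 1 ≤ m) (hmn : m ≤ n) {T T' : Tableau n (colShape m)}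
    (h : CrystalCover n (colShape m) T T') :
    ∀ s, 1 ≤ s → s ≤ m → T.entry s 1 ≤ T'.entry s 1 := by
  obtain ⟨i, _, _, p, hun, _, r, c, hrl, hT'⟩ := h
  rw [readingList_col hm hmn T] at hrl
  intro s h1 h2
  rw [hT' s 1]
  by_cases hc : s = r ∧ (1:ℕ) = c
  · rw [if_pos hc]
    -- from hrl : i = T.entry r 1 (with r = m - p, c = 1)
    rcases Nat.lt_or_ge p m with hpm | hpm
    · rw [List.getElem?_map, List.getElem?_range hpm] at hrl
      simp only [Option.map_some, Option.some.injEq, Prod.mk.injEq] at hrl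
      obtain ⟨⟨hr, hc1⟩, hiv⟩ := hrl
      rw [← hiv, hr, ← hc.1]
      omega
    · rw [List.getElem?_eq_none (by simpa using hpm)] at hrl
      cases hrl
  · rw [if_neg hc]

end Aux2

section Main

theorem le_of_componentwise {n m : ℕ} (hm : 1 ≤ m) (hmn : m ≤ n) :
    ∀ k (T T' : Tableau n (colShape m)),
      (∑ x ∈ Finset.Icc 1 m, (T'.entry x 1 - T.entry x 1)) = k →
      (∀ i, 1 ≤ i → i ≤ m → T.entry i 1 ≤ T'.entry i 1) →
      CrystalLE n (colShape m) T T' := by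
  intro k
  induction k using Nat.strong_induction_on with
  | _ k ih =>
    intro T T' hsum hle
    by_cases heq : ∀ i, 1 ≤ i → i ≤ m → T.entry i 1 = T'.entry i 1
    · rw [col_ext heq]
      exact Relation.ReflTransGen.refl
    · push_neg at heq
      obtain ⟨s, hs1, hs2, hsne⟩ := heq
      have hsP : T.entry s 1 < T'.entry s 1 := lt_of_le_of_ne (hle s hs1 hs2) hsne
      have hdec : DecidablePred (fun r => T.entry r 1 < T'.entry r 1) :=
        fun r => Nat.decLt _ _
      set r := Nat.findGreatest (fun r => T.entry r 1 < T'.entry r 1) m with hrdef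
      have hPr : T.entry r 1 < T'.entry r 1 := Nat.findGreatest_spec (P := fun r => T.entry r 1 < T'.entry r 1) hs2 hsP
      have hrm : r ≤ m := Nat.findGreatest_le m
      have hr1 : 1 ≤ r := by
        rcases Nat.eq_zero_or_pos r with h0 | h0
        · exfalso
          rw [h0] at hPr
          rw [T.zero_outside 0 1 (Or.inl rfl), T'.zero_outside 0 1 (Or.inl rfl)] at hPr
          omega
        · exact h0
      have hi0pos : 1 ≤ T.entry r 1 :=
        T.entry_pos r 1 hr1 le_rfl (by rw [colShape_eq_one hr1 hrm])
      have hT'le : T'.entry r 1 ≤ n + 1 :=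
        T'.entry_le r 1 hr1 le_rfl (by rw [colShape_eq_one hr1 hrm])
      have hkey : r < m → T.entry r 1 + 1 < T.entry (r+1) 1 := by
        intro hrltm
        have hnP : ¬ (T.entry (r+1) 1 < T'.entry (r+1) 1) :=
          Nat.findGreatest_is_greatest (P := fun r => T.entry r 1 < T'.entry r 1) (n := m)
            (by omega) (by omega)
        have heq1 := hle (r+1) (by omega) (by omega)
        have hmono := col_mono T' (r+1) r hr1 (by omega) (by omega)
        omega
      have hne : ∀ s, 1 ≤ s → s ≤ m → T.entry s 1 ≠ T.entry r 1 + 1 := by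
        intro t ht1 ht2
        rcases le_or_gt t r with htr | htr
        · have := col_mono T r t ht1 htr hrm
          omega
        · have h1 := hkey (by omega)
          have h2 := col_mono T t (r+1) (by omega) htr ht2
          omega
      set U : Tableau n (colShape m) :=
        { entry := fun a b => if a = r ∧ b = 1 then T.entry r 1 + 1 else T.entry a b
          entry_pos := by
            intro a b h1 h2 h3
            split
            · omega
            · exact T.entry_pos a b h1 h2 h3
          entry_le := by
            intro a b h1 h2 h3
            split
            · omega
            · exact T.entry_le a b h1 h2 h3
          row_weak := by
            intro a b h1 h2 h3
            exfalso
            have : colShape m a ≤ 1 := by unfold colShape; split <;> omega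
            omega
          col_strict := by
            intro a b h1 h2 h3 h4
            have hca : colShape m a = 1 := by
              have : colShape m a ≤ 1 := by unfold colShape; split <;> omega
              omega
            have hca1 : colShape m (a+1) = 1 := by
              have : colShape m (a+1) ≤ 1 := by unfold colShape; split <;> omega
              omega
            have ham : a ≤ m ∧ 1 ≤ a := by
              by_contra hc
              rw [colShape_eq_zero (by omega)] at hca
              omega
            have ham1 : a + 1 ≤ m := by
              by_contra hc
              rw [colShape_eq_zero (by omega)] at hca1
              omega
            have hb : b = 1 := by omega
            subst hb
            have hstrict := T.col_strict a 1 ham.2 le_rfl (by rw [hca]) (by rw [hca1])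
            by_cases hc1 : a = r
            · rw [if_pos ⟨hc1, rfl⟩, if_neg (by omega : ¬(a + 1 = r ∧ (1:ℕ) = 1))]
              subst hc1
              exact hkey (by omega)
            · rw [if_neg (by simp [hc1])]
              by_cases hc2 : a + 1 = r
              · rw [if_pos ⟨hc2, rfl⟩]
                rw [hc2] at hstrict
                omega
              · rw [if_neg (by simp [hc2])]
                exact hstrict
          zero_outside := by
            intro a b hor
            by_cases hc : a = r ∧ b = 1
            · exfalso
              obtain ⟨rfl, rfl⟩ := hc
              rcases hor with h | h | h
              · omega
              · omega
              · rw [colShape_eq_one hr1 hrm] at h; omega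
            · rw [if_neg hc]
              exact T.zero_outside a b hor } with hUdef
      have hcov : CrystalCover n (colShape m) T U := by
        refine ⟨T.entry r 1, hi0pos, by omega, ?_⟩
        exact frel_col hm hmn T U r hr1 hrm hne (fun r' c' => rfl)
      have hUr : ∀ a, U.entry a 1 = if a = r then T.entry r 1 + 1 else T.entry a 1 := by
        intro a
        show (if a = r ∧ (1:ℕ) = 1 then T.entry r 1 + 1 else T.entry a 1) = _
        by_cases hc : a = r <;> simp [hc]
      have hUrr : U.entry r 1 = T.entry r 1 + 1 := by rw [hUr r, if_pos rfl]
      have hrS : r ∈ Finset.Icc 1 m := Finset.mem_Icc.mpr ⟨hr1, hrm⟩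
      have hsum1 : ∑ x ∈ (Finset.Icc 1 m).erase r, (T'.entry x 1 - U.entry x 1)
          = ∑ x ∈ (Finset.Icc 1 m).erase r, (T'.entry x 1 - T.entry x 1) := by
        apply Finset.sum_congr rfl
        intro x hx
        rw [hUr x, if_neg (Finset.ne_of_mem_erase hx)]
      rw [← Finset.sum_erase_add _ _ hrS] at hsum
      have hknew : (∑ x ∈ Finset.Icc 1 m, (T'.entry x 1 - U.entry x 1)) = k - 1 := by
        rw [← Finset.sum_erase_add _ _ hrS, hsum1, hUrr]
        omega
      have hUle : ∀ i, 1 ≤ i → i ≤ m → U.entry i 1 ≤ T'.entry i 1 := by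
        intro a h1 h2
        rw [hUr a]
        by_cases hc : a = r
        · rw [if_pos hc, hc]; omega
        · rw [if_neg hc]; exact hle a h1 h2
      exact Relation.ReflTransGen.head hcov
        (ih (k-1) (by omega) U T' hknew hUle)

theorem crystal_le_iff {n m : ℕ} (hm : 1 ≤ m) (hmn : m ≤ n)
    (T T' : Tableau n (colShape m)) :
    CrystalLE n (colShape m) T T' ↔
      ∀ i, 1 ≤ i → i ≤ m → T.entry i 1 ≤ T'.entry i 1 := by
  constructor
  · intro h
    induction h with
    | refl => intro i _ _; exact le_rfl
    | tail _ hbc ihh =>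
      intro i h1 h2
      exact (ihh i h1 h2).trans (cover_mono hm hmn hbc i h1 h2)
  · intro h
    exact le_of_componentwise hm hmn _ T T' rfl h

end Main

section Parts

theorem exists_tab {n m : ℕ} (hm : 1 ≤ m) (hmn : m ≤ n) (f : Fin m → ℕ)
    (hanti : ∀ i j : Fin m, i ≤ j → f j ≤ f i) (hbd : ∀ i, f i ≤ n + 1 - m) :
    ∃ T : Tableau n (colShape m), ∀ a (h1 : 1 ≤ a) (h2 : a ≤ m),
      T.entry a 1 = f ⟨m - a, by omega⟩ + a := by
  have hcs : ∀ a, colShape m a ≤ 1 := by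
    intro a; unfold colShape; split <;> omega
  have hin : ∀ a b, 1 ≤ b → b ≤ colShape m a → 1 ≤ a ∧ a ≤ m ∧ b = 1 := by
    intro a b h1 h2
    by_cases hc : 1 ≤ a ∧ a ≤ m
    · rw [colShape_eq_one hc.1 hc.2] at h2; exact ⟨hc.1, hc.2, by omega⟩
    · rw [colShape_eq_zero hc] at h2; omega
  refine ⟨{ entry := fun a b => if h : 1 ≤ a ∧ a ≤ m ∧ b = 1
              then f ⟨m - a, by omega⟩ + a else 0
            entry_pos := ?_
            entry_le := ?_
            row_weak := ?_
            col_strict := ?_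
            zero_outside := ?_ }, ?_⟩
  · intro a b h1 h2 h3
    obtain ⟨ha1, ha2, rfl⟩ := hin a b h2 h3
    rw [dif_pos ⟨ha1, ha2, rfl⟩]
    omega
  · intro a b h1 h2 h3
    obtain ⟨ha1, ha2, rfl⟩ := hin a b h2 h3
    rw [dif_pos ⟨ha1, ha2, rfl⟩]
    have := hbd ⟨m - a, by omega⟩
    omega
  · intro a b h1 h2 h3
    exfalso
    have := hcs a
    omega
  · intro a b h1 h2 h3 h4
    obtain ⟨ha1, ha2, rfl⟩ := hin a b h2 h3
    obtain ⟨hb1, hb2, -⟩ := hin (a+1) 1 le_rfl h4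
    rw [dif_pos ⟨ha1, ha2, rfl⟩, dif_pos ⟨hb1, hb2, rfl⟩]
    have hmono : f ⟨m - a, by omega⟩ ≤ f ⟨m - (a+1), by omega⟩ := by
      apply hanti
      simp only [Fin.mk_le_mk]
      omega
    omega
  · intro a b hor
    rw [dif_neg]
    intro ⟨h1, h2, h3⟩
    rcases hor with h | h | h
    · omega
    · omega
    · rw [colShape_eq_one h1 h2] at h; omega
  · intro a h1 h2
    show (if h : 1 ≤ a ∧ a ≤ m ∧ 1 = 1 then f ⟨m - a, by omega⟩ + a else 0) = _
    rw [dif_pos ⟨h1, h2, rfl⟩]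

theorem lower_row_iff {k : ℕ} (A : Finset (Fin k))
    (hA : ∀ a b : Fin k, a ≤ b → b ∈ A → a ∈ A) (j : Fin k) :
    j ∈ A ↔ (j : ℕ) < A.card := by
  constructor
  · intro hj
    have hsub : Finset.Iic j ⊆ A := fun a ha => hA a j (Finset.mem_Iic.mp ha) hj
    have h := Finset.card_le_card hsub
    rw [Fin.card_Iic] at h
    omega
  · intro hcard
    by_contra hj
    have hsub : A ⊆ Finset.Iio j := by
      intro b hb
      rw [Finset.mem_Iio]
      by_contra hbj
      exact hj (hA j b (le_of_not_gt hbj) hb)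
    have h := Finset.card_le_card hsub
    rw [Fin.card_Iio] at h
    omega

end Parts

section Final

variable {n m : ℕ}

/-- antitone of the partition tuple -/
theorem phi_anti (hm : 1 ≤ m) (T : Tableau n (colShape m)) (i j : Fin m) (hij : i ≤ j) :
    T.entry (m - (j:ℕ)) 1 - (m - (j:ℕ)) ≤ T.entry (m - (i:ℕ)) 1 - (m - (i:ℕ)) := by
  have hi := i.isLt
  have hj := j.isLt
  have hij' : (i:ℕ) ≤ (j:ℕ) := hij
  have h1 := col_mono T (m - (i:ℕ)) (m - (j:ℕ)) (by omega) (by omega) (by omega)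
  have h2 := col_ge T (a := m - (j:ℕ)) (by omega) (by omega)
  omega

theorem phi_bd (hm : 1 ≤ m) (hmn : m ≤ n) (T : Tableau n (colShape m)) (i : Fin m) :
    T.entry (m - (i:ℕ)) 1 - (m - (i:ℕ)) ≤ n + 1 - m := by
  have hi := i.isLt
  have h1 := col_le T (a := m - (i:ℕ)) (by omega) (by omega)
  have h2 := col_ge T (a := m - (i:ℕ)) (by omega) (by omega)
  omega

theorem phi_ord (hm : 1 ≤ m) (T T' : Tableau n (colShape m)) :
    (∀ a, 1 ≤ a → a ≤ m → T.entry a 1 ≤ T'.entry a 1) ↔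
      (∀ i : Fin m, T.entry (m - (i:ℕ)) 1 - (m - (i:ℕ))
        ≤ T'.entry (m - (i:ℕ)) 1 - (m - (i:ℕ))) := by
  constructor
  · intro h i
    have hi := i.isLt
    have := h (m - (i:ℕ)) (by omega) (by omega)
    omega
  · intro h a h1 h2
    have := h ⟨m - a, by omega⟩
    simp only at this
    rw [show m - (m - a) = a by omega] at this
    have g1 := col_ge T (a := a) h1 h2
    have g2 := col_ge T' (a := a) h1 h2
    omega

theorem phi_inj (hm : 1 ≤ m) (T T' : Tableau n (colShape m))
    (h : ∀ i : Fin m, T.entry (m - (i:ℕ)) 1 - (m - (i:ℕ))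
      = T'.entry (m - (i:ℕ)) 1 - (m - (i:ℕ))) : T = T' := by
  apply col_ext
  intro a h1 h2
  have := h ⟨m - a, by omega⟩
  simp only at this
  rw [show m - (m - a) = a by omega] at this
  have g1 := col_ge T (a := a) h1 h2
  have g2 := col_ge T' (a := a) h1 h2
  omega

theorem phi_of_tab (hm : 1 ≤ m) (T : Tableau n (colShape m)) (f : Fin m → ℕ)
    (hT : ∀ a (h1 : 1 ≤ a) (h2 : a ≤ m), T.entry a 1 = f ⟨m - a, by omega⟩ + a)
    (i : Fin m) : T.entry (m - (i:ℕ)) 1 - (m - (i:ℕ)) = f i := by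
  have hi := i.isLt
  rw [hT (m - (i:ℕ)) (by omega) (by omega)]
  have hfin : (⟨m - (m - (i:ℕ)), by omega⟩ : Fin m) = i := by
    apply Fin.ext
    simp only
    omega
  rw [hfin]
  omega

end Final

/-- For `1 ≤ m ≤ n`, the crystal order on `B_{(1^m)}^n` is componentwise
comparison of the column entries; the map `T ↦ (T(m,1)−m, …, T(1,1)−1)` is an order
isomorphism onto the partitions fitting inside an `m × (n+1−m)` box ordered by
containment; and `B_{(1^m)}^n` is order-isomorphic to the distributive lattice of order
ideals (lower sets) of the product of chains `[m] × [n+1−m]`. -/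
theorem minuscule_crystal_iso (n m : ℕ) (hm : 1 ≤ m) (hmn : m ≤ n) :
    (∀ T T' : Tableau n (colShape m),
      CrystalLE n (colShape m) T T' ↔ ∀ i, 1 ≤ i → i ≤ m → T.entry i 1 ≤ T'.entry i 1) ∧
    (∃ φ : Tableau n (colShape m) → (Fin m → ℕ),
      (∀ T (i : Fin m), φ T i = T.entry (m - (i : ℕ)) 1 - (m - (i : ℕ))) ∧
      (∀ T (i j : Fin m), i ≤ j → φ T j ≤ φ T i) ∧
      (∀ T (i : Fin m), φ T i ≤ n + 1 - m) ∧
      Function.Injective φ ∧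
      (∀ f : Fin m → ℕ, (∀ i j : Fin m, i ≤ j → f j ≤ f i) → (∀ i, f i ≤ n + 1 - m) →
        ∃ T, φ T = f) ∧
      (∀ T T', CrystalLE n (colShape m) T T' ↔ ∀ i, φ T i ≤ φ T' i)) ∧
    (∃ ψ : Tableau n (colShape m) → Set (Fin m × Fin (n + 1 - m)),
      (∀ T, IsLowerSet (ψ T)) ∧ Function.Injective ψ ∧
      (∀ S : Set (Fin m × Fin (n + 1 - m)), IsLowerSet S → ∃ T, ψ T = S) ∧
      (∀ T T', CrystalLE n (colShape m) T T' ↔ ψ T ⊆ ψ T')) := by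
  classical
  -- abbreviations
  have hphi_surj : ∀ f : Fin m → ℕ, (∀ i j : Fin m, i ≤ j → f j ≤ f i) →
      (∀ i, f i ≤ n + 1 - m) →
      ∃ T : Tableau n (colShape m),
        (fun (i : Fin m) => T.entry (m - (i:ℕ)) 1 - (m - (i:ℕ))) = f := by
    intro f hanti hbd
    obtain ⟨T, hT⟩ := exists_tab hm hmn f hanti hbd
    exact ⟨T, funext fun i => phi_of_tab hm T f hT i⟩
  have hpsi_sub : ∀ T T' : Tableau n (colShape m),
      (∀ i : Fin m, T.entry (m - (i:ℕ)) 1 - (m - (i:ℕ))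
          ≤ T'.entry (m - (i:ℕ)) 1 - (m - (i:ℕ))) ↔
      ({p : Fin m × Fin (n + 1 - m) | ((p.2:ℕ)) < T.entry (m - (p.1:ℕ)) 1 - (m - (p.1:ℕ))}
        ⊆ {p : Fin m × Fin (n + 1 - m) |
            ((p.2:ℕ)) < T'.entry (m - (p.1:ℕ)) 1 - (m - (p.1:ℕ))}) := by
    intro T T'
    constructor
    · intro h p hp
      have := h p.1
      simp only [Set.mem_setOf_eq] at hp ⊢
      omega
    · intro h i
      by_contra hc
      push_neg at hc
      have hbd' := phi_bd hm hmn T i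
      have hj : T'.entry (m - (i:ℕ)) 1 - (m - (i:ℕ)) < n + 1 - m := by omega
      have hmem : (⟨i, ⟨T'.entry (m - (i:ℕ)) 1 - (m - (i:ℕ)), hj⟩⟩ :
          Fin m × Fin (n + 1 - m)) ∈
          {p : Fin m × Fin (n + 1 - m) |
            ((p.2:ℕ)) < T.entry (m - (p.1:ℕ)) 1 - (m - (p.1:ℕ))} := by
        simp only [Set.mem_setOf_eq]
        omega
      have := h hmem
      simp only [Set.mem_setOf_eq] at this
      omega
  refine ⟨fun T T' => crystal_le_iff hm hmn T T',
    ⟨fun T i => T.entry (m - (i:ℕ)) 1 - (m - (i:ℕ)),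
      fun T i => rfl,
      fun T i j hij => phi_anti hm T i j hij,
      fun T i => phi_bd hm hmn T i,
      fun T T' h => phi_inj hm T T' (fun i => congrFun h i),
      hphi_surj,
      fun T T' => (crystal_le_iff hm hmn T T').trans (phi_ord hm T T')⟩,
    ⟨fun T => {p : Fin m × Fin (n + 1 - m) |
        ((p.2:ℕ)) < T.entry (m - (p.1:ℕ)) 1 - (m - (p.1:ℕ))},
      ?_, ?_, ?_, ?_⟩⟩
  · -- lower sets
    intro T a b hba ha
    simp only [Set.mem_setOf_eq] at ha ⊢
    rw [Prod.le_def] at hba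
    have h1 : (b.2:ℕ) ≤ (a.2:ℕ) := hba.2
    have h2 := phi_anti hm T b.1 a.1 hba.1
    omega
  · -- injective
    intro T T' h
    apply phi_inj hm T T'
    intro i
    have h1 := (hpsi_sub T T').mpr (le_of_eq h) i
    have h2 := (hpsi_sub T' T).mpr (ge_of_eq h) i
    omega
  · -- surjective onto lower sets
    intro S hS
    set A : Fin m → Finset (Fin (n + 1 - m)) :=
      fun i => Finset.univ.filter (fun j => (i, j) ∈ S) with hA
    have hmemA : ∀ (i : Fin m) (j : Fin (n + 1 - m)), j ∈ A i ↔ (i, j) ∈ S := by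
      intro i j
      rw [hA]
      simp
    have hrow : ∀ (i : Fin m) (a b : Fin (n + 1 - m)), a ≤ b → b ∈ A i → a ∈ A i := by
      intro i a b hab hb
      rw [hmemA] at hb ⊢
      exact hS (Prod.mk_le_mk.mpr ⟨le_rfl, hab⟩) hb
    have hanti : ∀ i j : Fin m, i ≤ j → (A j).card ≤ (A i).card := by
      intro i j hij
      apply Finset.card_le_card
      intro x hx
      rw [hmemA] at hx ⊢
      exact hS (Prod.mk_le_mk.mpr ⟨hij, le_rfl⟩) hx
    have hbd : ∀ i : Fin m, (A i).card ≤ n + 1 - m := by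
      intro i
      have := Finset.card_le_univ (A i)
      simpa using this
    obtain ⟨T, hT⟩ := exists_tab hm hmn (fun i => (A i).card) hanti hbd
    refine ⟨T, ?_⟩
    ext ⟨i, j⟩
    simp only [Set.mem_setOf_eq]
    rw [phi_of_tab hm T (fun i => (A i).card) hT i]
    rw [← lower_row_iff (A i) (hrow i) j, hmemA]
  · -- order
    intro T T'
    exact (crystal_le_iff hm hmn T T').trans ((phi_ord hm T T').trans (hpsi_sub T T'))
end

section
/- Let k ≥ 1. For single-row tableaux T, T' in the type A_n crystal B_{(k)}^n, one has T ≤ T' in the crystal order if and only if T(1,j) ≤ T'(1,j) for every j ∈ {1,…,k}. Consequently, the map sending T to the tuple (T(1,k)−1, …, T(1,2)−1, T(1,1)−1) is an order isomorphism from B_{(k)}^n onto the set of partitions fitting inside a k × n box ordered by containment; in particular, B_{(k)}^n is order-isomorphic to the distributive lattice of order ideals of the product of chains [k] × [n]. -/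
/-- The single-row shape `(k)`. -/
def rowShape (k : ℕ) : ℕ → ℕ := fun i => if i = 1 then k else 0

/-! ### Auxiliary lemmas -/

lemma readingList_row (n k : ℕ) (hn : 1 ≤ n) (T : Tableau n (rowShape k)) :
    readingList n (rowShape k) T =
      (List.range k).map fun j => (((1:ℕ), j + 1), T.entry 1 (j + 1)) := by
  obtain ⟨n, rfl⟩ : ∃ m, n = m + 1 := ⟨n - 1, by omega⟩
  unfold readingList
  rw [List.range_succ, List.map_append, List.flatten_append]
  have h1 : ((List.range n).map fun m =>
      (List.range (rowShape k (n + 1 - m))).map fun j =>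
        ((n + 1 - m, j + 1), T.entry (n + 1 - m) (j + 1))) = List.replicate n [] := by
    rw [List.eq_replicate_iff]
    refine ⟨by simp, ?_⟩
    intro b hb
    simp only [List.mem_map, List.mem_range] at hb
    obtain ⟨m, hm, rfl⟩ := hb
    have : rowShape k (n + 1 - m) = 0 := by
      unfold rowShape; simp only [ite_eq_right_iff]; omega
    simp [this]
  rw [h1]
  have h2 : n + 1 - n = 1 := by omega
  simp [h2, rowShape]

lemma word_row (n k : ℕ) (hn : 1 ≤ n) (T : Tableau n (rowShape k)) :
    word n (rowShape k) T = (List.range k).map fun j => T.entry 1 (j + 1) := by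
  unfold word
  rw [readingList_row n k hn T, List.map_map]
  rfl

lemma word_get (n k : ℕ) (hn : 1 ≤ n) (T : Tableau n (rowShape k)) (q : ℕ) (hq : q < k) :
    (word n (rowShape k) T)[q]? = some (T.entry 1 (q + 1)) := by
  rw [word_row n k hn T, List.getElem?_map, List.getElem?_range hq]; rfl

lemma word_get_none (n k : ℕ) (hn : 1 ≤ n) (T : Tableau n (rowShape k)) (q : ℕ)
    (hq : k ≤ q) : (word n (rowShape k) T)[q]? = none := by
  rw [word_row n k hn T, List.getElem?_eq_none]
  simpa using hq

lemma row_mono (n k : ℕ) (T : Tableau n (rowShape k)) (a : ℕ) (ha : 1 ≤ a) :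
    ∀ b, a ≤ b → b ≤ k → T.entry 1 a ≤ T.entry 1 b := by
  intro b
  induction b with
  | zero => intro h1 h2; omega
  | succ b ih =>
    intro h1 h2
    rcases Nat.lt_or_ge a (b + 1) with h | h
    · exact le_trans (ih (by omega) (by omega))
        (T.row_weak 1 b le_rfl (by omega) (by simpa [rowShape] using h2))
    · have : a = b + 1 := by omega
      simp [this]

lemma seg_mem_iff {w : List ℕ} {a b x : ℕ} :
    x ∈ seg w a b ↔ ∃ p, a ≤ p ∧ p ≤ b ∧ w[p]? = some x := by
  unfold seg
  constructor
  · intro hx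
    rw [List.mem_iff_getElem] at hx
    obtain ⟨t, ht, hval⟩ := hx
    have ht' : t < (w.drop a).length := by
      have := ht; simp only [List.length_take] at this; omega
    have hwl : a + t < w.length := by
      have := ht'; simp only [List.length_drop] at this; omega
    have htb : t < b + 1 - a := by
      have := ht; simp only [List.length_take] at this; omega
    refine ⟨a + t, by omega, by omega, ?_⟩
    rw [List.getElem?_eq_getElem hwl]
    congr 1
    rw [List.getElem_take, List.getElem_drop] at hval
    exact hval
  · rintro ⟨p, hap, hpb, hp⟩
    have hpl : p < w.length := by
      by_contra h
      rw [List.getElem?_eq_none (by omega)] at hp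
      simp at hp
    have hval : w[p] = x := by
      rw [List.getElem?_eq_getElem hpl] at hp
      exact Option.some.inj hp
    rw [List.mem_iff_getElem]
    have hlen : (List.take (b + 1 - a) (w.drop a)).length = (b + 1 - a) ⊓ (w.length - a) := by
      simp [List.length_take, List.length_drop]
    refine ⟨p - a, by rw [hlen]; omega, ?_⟩
    rw [List.getElem_take, List.getElem_drop, List.getElem_eq_iff,
      show a + (p - a) = p by omega]
    exact hp

lemma tableau_ext (n k : ℕ) (T T' : Tableau n (rowShape k))
    (h : ∀ c, 1 ≤ c → c ≤ k → T.entry 1 c = T'.entry 1 c) : T = T' := by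
  have he : T.entry = T'.entry := by
    funext r c
    by_cases hr : r = 1
    · subst hr
      by_cases hc : 1 ≤ c ∧ c ≤ k
      · exact h c hc.1 hc.2
      · have hcond : (1:ℕ) = 0 ∨ c = 0 ∨ rowShape k 1 < c := by
          have hks : rowShape k 1 = k := if_pos rfl
          rw [hks]; omega
        rw [T.zero_outside 1 c hcond, T'.zero_outside 1 c hcond]
    · have hcond : r = 0 ∨ c = 0 ∨ rowShape k r < c := by
        have hks : rowShape k r = 0 := if_neg hr
        rw [hks]; omega
      rw [T.zero_outside r c hcond, T'.zero_outside r c hcond]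
  cases T; cases T'
  simp only at he
  subst he
  rfl

def incr (n k : ℕ) (T : Tableau n (rowShape k)) (j : ℕ) (hj1 : 1 ≤ j) (hjk : j ≤ k)
    (hin : T.entry 1 j ≤ n)
    (hnext : j < k → T.entry 1 j < T.entry 1 (j + 1)) : Tableau n (rowShape k) where
  entry r c := if r = 1 ∧ c = j then T.entry 1 j + 1 else T.entry r c
  entry_pos r c h1 h2 h3 := by
    split
    · omega
    · exact T.entry_pos r c h1 h2 h3
  entry_le r c h1 h2 h3 := by
    split
    · omega
    · exact T.entry_le r c h1 h2 h3
  row_weak r c h1 h2 h3 := by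
    have hr : r = 1 := by
      by_contra hr
      have : rowShape k r = 0 := if_neg hr
      omega
    subst hr
    have hck : c + 1 ≤ k := by
      have : rowShape k 1 = k := if_pos rfl
      omega
    by_cases h4 : c = j
    · rw [if_pos ⟨rfl, h4⟩, if_neg (by omega)]
      subst h4
      have := hnext (by omega)
      omega
    · rw [if_neg (by simp [h4])]
      by_cases h5 : c + 1 = j
      · rw [if_pos ⟨rfl, h5⟩]
        have := T.row_weak 1 c le_rfl h2 h3
        rw [h5] at this
        omega
      · rw [if_neg (by simp [h5])]
        exact T.row_weak 1 c le_rfl h2 h3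
  col_strict r c h1 h2 h3 h4 := by
    exfalso
    have : rowShape k (r + 1) = 0 := if_neg (by omega)
    omega
  zero_outside r c h := by
    have hne : ¬ (r = 1 ∧ c = j) := by
      rintro ⟨rfl, rfl⟩
      have : rowShape k 1 = k := if_pos rfl
      omega
    rw [if_neg hne]
    exact T.zero_outside r c h

lemma incr_entry (n k : ℕ) (T : Tableau n (rowShape k)) (j : ℕ) (hj1 : 1 ≤ j) (hjk : j ≤ k)
    (hin : T.entry 1 j ≤ n) (hnext : j < k → T.entry 1 j < T.entry 1 (j + 1)) (r c : ℕ) :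
    (incr n k T j hj1 hjk hin hnext).entry r c =
      if r = 1 ∧ c = j then T.entry 1 j + 1 else T.entry r c := rfl

lemma cover_incr (n k : ℕ) (hn : 1 ≤ n) (T T' : Tableau n (rowShape k)) (j : ℕ)
    (hj1 : 1 ≤ j) (hjk : j ≤ k)
    (hin : T.entry 1 j ≤ n)
    (hnext : ∀ c, j < c → c ≤ k → T.entry 1 j < T.entry 1 c)
    (hT' : ∀ r' c', T'.entry r' c' =
      if r' = 1 ∧ c' = j then T.entry 1 j + 1 else T.entry r' c') :
    CrystalCover n (rowShape k) T T' := by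
  refine ⟨T.entry 1 j,
    T.entry_pos 1 j le_rfl hj1 (by rw [show rowShape k 1 = k from if_pos rfl]; omega),
    hin, j - 1, ⟨?_, ?_⟩, ?_, 1, j, ?_, hT'⟩
  · rw [word_get n k hn T (j - 1) (by omega), show j - 1 + 1 = j by omega]
  · intro a ha
    have hzero : (seg (word n (rowShape k) T) a (j - 1)).count (T.entry 1 j + 1) = 0 := by
      rw [List.count_eq_zero]
      intro hmem
      obtain ⟨p, hap, hpb, hp⟩ := seg_mem_iff.mp hmem
      have hpk : p < k := by
        by_contra h
        rw [word_get_none n k hn T p (by omega)] at hp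
        simp at hp
      rw [word_get n k hn T p hpk] at hp
      have hval : T.entry 1 (p + 1) = T.entry 1 j + 1 := Option.some.inj hp
      have := row_mono n k T (p + 1) (by omega) j (by omega) hjk
      omega
    rw [hzero, List.count_pos_iff]
    apply seg_mem_iff.mpr
    exact ⟨j - 1, ha, le_rfl, by
      rw [word_get n k hn T (j - 1) (by omega), show j - 1 + 1 = j by omega]⟩
  · rintro q hq ⟨hq1, -⟩
    rcases Nat.lt_or_ge q k with h | h
    · rw [word_get n k hn T q h] at hq1
      have hval : T.entry 1 (q + 1) = T.entry 1 j := Option.some.inj hq1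
      have := hnext (q + 1) (by omega) (by omega)
      omega
    · rw [word_get_none n k hn T q h] at hq1
      simp at hq1
  · rw [readingList_row n k hn T, List.getElem?_map,
      List.getElem?_range (show j - 1 < k by omega)]
    simp only [Option.map_some]
    rw [show j - 1 + 1 = j by omega]

lemma cover_pointwise (n k : ℕ) (hn : 1 ≤ n) (T T' : Tableau n (rowShape k))
    (h : CrystalCover n (rowShape k) T T') : ∀ r c, T.entry r c ≤ T'.entry r c := by
  obtain ⟨i, -, -, p, -, -, r, c, hrl, hupd⟩ := h
  rw [readingList_row n k hn T, List.getElem?_map] at hrl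
  rcases Nat.lt_or_ge p k with hpk | hpk
  · rw [List.getElem?_range hpk] at hrl
    simp only [Option.map_some, Option.some_inj, Prod.mk.injEq] at hrl
    obtain ⟨⟨hr, hc⟩, hi⟩ := hrl
    intro r' c'
    rw [hupd r' c']
    split
    · next hcc =>
      obtain ⟨rfl, rfl⟩ := hcc
      rw [← hr, ← hc]
      omega
    · exact le_rfl
  · rw [List.getElem?_eq_none (by simpa using hpk)] at hrl
    simp at hrl

lemma crystalLE_pointwise (n k : ℕ) (hn : 1 ≤ n) (T T' : Tableau n (rowShape k))
    (h : CrystalLE n (rowShape k) T T') : ∀ r c, T.entry r c ≤ T'.entry r c := by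
  induction h with
  | refl => exact fun r c => le_rfl
  | tail _ hcov ih =>
    exact fun r c => le_trans (ih r c) (cover_pointwise n k hn _ _ hcov r c)

lemma pointwise_crystalLE (n k : ℕ) (hn : 1 ≤ n) :
    ∀ (N : ℕ) (T T' : Tableau n (rowShape k)),
      (∑ t ∈ Finset.range k, (T'.entry 1 (t + 1) - T.entry 1 (t + 1))) ≤ N →
      (∀ c, 1 ≤ c → c ≤ k → T.entry 1 c ≤ T'.entry 1 c) →
      CrystalLE n (rowShape k) T T' := by
  intro N
  induction N with
  | zero =>
    intro T T' hsum hle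
    have heq : T = T' := by
      apply tableau_ext n k
      intro c h1 h2
      have h3 := Finset.sum_eq_zero_iff.mp (Nat.le_zero.mp hsum) (c - 1)
        (Finset.mem_range.mpr (by omega))
      rw [show c - 1 + 1 = c by omega] at h3
      have := hle c h1 h2
      omega
    rw [heq]
    exact Relation.ReflTransGen.refl
  | succ N ih =>
    intro T T' hsum hle
    by_cases h0 : ∀ c, 1 ≤ c → c ≤ k → T'.entry 1 c ≤ T.entry 1 c
    · have heq : T = T' := tableau_ext n k T T'
        (fun c h1 h2 => le_antisymm (hle c h1 h2) (h0 c h1 h2))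
      rw [heq]
      exact Relation.ReflTransGen.refl
    · push_neg at h0
      obtain ⟨c0, h1, h2, h3⟩ := h0
      set j := Nat.findGreatest (fun c => T.entry 1 c < T'.entry 1 c) k with hjdef
      have hPj : T.entry 1 j < T'.entry 1 j := by
        exact Nat.findGreatest_spec (P := fun c => T.entry 1 c < T'.entry 1 c) h2 h3
      have hj1 : 1 ≤ j := le_trans h1 (Nat.le_findGreatest h2 h3)
      have hjk : j ≤ k := Nat.findGreatest_le k
      have hmax : ∀ c, j < c → c ≤ k → T'.entry 1 c = T.entry 1 c := by
        intro c hc1 hc2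
        have hng := Nat.findGreatest_is_greatest (k := c)
          (P := fun c => T.entry 1 c < T'.entry 1 c) hc1 hc2
        have := hle c (by omega) hc2
        omega
      have hin : T.entry 1 j ≤ n := by
        have := T'.entry_le 1 j le_rfl hj1
          (by rw [show rowShape k 1 = k from if_pos rfl]; omega)
        omega
      have hnext : j < k → T.entry 1 j < T.entry 1 (j + 1) := by
        intro hjk'
        have e1 := hmax (j + 1) (by omega) (by omega)
        have e2 := T'.row_weak 1 j le_rfl hj1
          (by rw [show rowShape k 1 = k from if_pos rfl]; omega)
        omega
      have hcov : CrystalCover n (rowShape k) T (incr n k T j hj1 hjk hin hnext) := by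
        apply cover_incr n k hn T _ j hj1 hjk hin
        · intro c hc1 hc2
          calc T.entry 1 j < T.entry 1 (j + 1) := hnext (by omega)
            _ ≤ T.entry 1 c := row_mono n k T (j + 1) (by omega) c hc1 hc2
        · intro r' c'
          exact incr_entry n k T j hj1 hjk hin hnext r' c'
      refine Relation.ReflTransGen.head hcov (ih _ T' ?_ ?_)
      · have hterm : ∀ t ∈ Finset.range k,
            T'.entry 1 (t + 1) - T.entry 1 (t + 1)
              = (T'.entry 1 (t + 1) - (incr n k T j hj1 hjk hin hnext).entry 1 (t + 1))
                + (if t = j - 1 then 1 else 0) := by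
          intro t ht
          rw [incr_entry]
          by_cases h : t = j - 1
          · subst h
            rw [if_pos rfl, if_pos ⟨rfl, by omega⟩, show j - 1 + 1 = j by omega]
            omega
          · rw [if_neg h, if_neg (by omega)]
            omega
        rw [Finset.sum_congr rfl hterm, Finset.sum_add_distrib,
          Finset.sum_ite_eq' (Finset.range k) (j - 1) (fun _ => 1),
          if_pos (Finset.mem_range.mpr (by omega))] at hsum
        omega
      · intro c hc1 hc2
        rw [incr_entry]
        split
        · next h =>
          obtain ⟨-, rfl⟩ := h
          omega
        · exact hle c hc1 hc2

lemma crystalLE_iff_pointwise (n k : ℕ) (hn : 1 ≤ n) (T T' : Tableau n (rowShape k)) :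
    CrystalLE n (rowShape k) T T' ↔ ∀ c, 1 ≤ c → c ≤ k → T.entry 1 c ≤ T'.entry 1 c := by
  constructor
  · intro h c _ _
    exact crystalLE_pointwise n k hn T T' h 1 c
  · intro h
    exact pointwise_crystalLE n k hn _ T T' le_rfl h

def phi (n k : ℕ) (T : Tableau n (rowShape k)) : Fin k → ℕ :=
  fun j => T.entry 1 (k - (j : ℕ)) - 1

lemma rowShape_one (k : ℕ) : rowShape k 1 = k := if_pos rfl

lemma phi_antitone (n k : ℕ) (T : Tableau n (rowShape k)) (i j : Fin k) (hij : i ≤ j) :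
    phi n k T j ≤ phi n k T i := by
  have hij' : (i : ℕ) ≤ (j : ℕ) := hij
  have := row_mono n k T (k - (j : ℕ)) (by omega) (k - (i : ℕ)) (by omega) (by omega)
  unfold phi
  omega

lemma phi_le (n k : ℕ) (T : Tableau n (rowShape k)) (j : Fin k) : phi n k T j ≤ n := by
  have hj : (j : ℕ) < k := j.isLt
  have := T.entry_le 1 (k - (j : ℕ)) le_rfl (by omega) (by rw [rowShape_one]; omega)
  unfold phi
  omega

lemma phi_injective (n k : ℕ) : Function.Injective (phi n k) := by
  intro T T' h
  apply tableau_ext n k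
  intro c h1 h2
  have hc : k - (k - c) = c := by omega
  have hphi := congrFun h ⟨k - c, by omega⟩
  unfold phi at hphi
  simp only at hphi
  rw [hc] at hphi
  have e1 := T.entry_pos 1 c le_rfl h1 (by rw [rowShape_one]; omega)
  have e2 := T'.entry_pos 1 c le_rfl h1 (by rw [rowShape_one]; omega)
  omega

def extend (k : ℕ) (f : Fin k → ℕ) : ℕ → ℕ :=
  fun m => if h : m < k then f ⟨m, h⟩ else 0

def ofFun (n k : ℕ) (hk : 1 ≤ k) (f : Fin k → ℕ)
    (hmono : ∀ i j : Fin k, i ≤ j → f j ≤ f i) (hb : ∀ j, f j ≤ n) :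
    Tableau n (rowShape k) where
  entry r c := if r = 1 ∧ 1 ≤ c ∧ c ≤ k then extend k f (k - c) + 1 else 0
  entry_pos r c h1 h2 h3 := by
    have hr : r = 1 := by
      by_contra hr
      have : rowShape k r = 0 := if_neg hr
      omega
    subst hr
    rw [rowShape_one] at h3
    rw [if_pos ⟨rfl, h2, h3⟩]
    omega
  entry_le r c h1 h2 h3 := by
    have hr : r = 1 := by
      by_contra hr
      have : rowShape k r = 0 := if_neg hr
      omega
    subst hr
    rw [rowShape_one] at h3
    rw [if_pos ⟨rfl, h2, h3⟩]
    have : extend k f (k - c) ≤ n := by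
      unfold extend
      split
      · apply hb
      · omega
    omega
  row_weak r c h1 h2 h3 := by
    have hr : r = 1 := by
      by_contra hr
      have : rowShape k r = 0 := if_neg hr
      omega
    subst hr
    rw [rowShape_one] at h3
    rw [if_pos ⟨rfl, h2, by omega⟩, if_pos ⟨rfl, by omega, h3⟩]
    have key : extend k f (k - c) ≤ extend k f (k - (c + 1)) := by
      unfold extend
      rw [dif_pos (show k - c < k by omega), dif_pos (show k - (c + 1) < k by omega)]
      exact hmono ⟨k - (c + 1), by omega⟩ ⟨k - c, by omega⟩ (by
        rw [Fin.mk_le_mk]; omega)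
    omega
  col_strict r c h1 h2 h3 h4 := by
    exfalso
    have : rowShape k (r + 1) = 0 := if_neg (by omega)
    omega
  zero_outside r c h := by
    rw [if_neg]
    rintro ⟨rfl, hc1, hc2⟩
    rw [rowShape_one] at h
    omega

lemma phi_surjective (n k : ℕ) (hk : 1 ≤ k) (f : Fin k → ℕ)
    (hmono : ∀ i j : Fin k, i ≤ j → f j ≤ f i) (hb : ∀ j, f j ≤ n) :
    phi n k (ofFun n k hk f hmono hb) = f := by
  funext j
  have hj : (j : ℕ) < k := j.isLt
  show (if (1:ℕ) = 1 ∧ 1 ≤ k - (j : ℕ) ∧ k - (j : ℕ) ≤ k then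
    extend k f (k - (k - (j : ℕ))) + 1 else 0) - 1 = f j
  rw [if_pos ⟨rfl, by omega, by omega⟩]
  unfold extend
  rw [dif_pos (show k - (k - (j : ℕ)) < k by omega)]
  rw [Nat.add_sub_cancel]
  congr 1
  exact Fin.ext (show k - (k - (j : ℕ)) = (j : ℕ) by omega)

lemma crystalLE_iff_phi (n k : ℕ) (hn : 1 ≤ n) (hk : 1 ≤ k)
    (T T' : Tableau n (rowShape k)) :
    CrystalLE n (rowShape k) T T' ↔ ∀ j, phi n k T j ≤ phi n k T' j := by
  rw [crystalLE_iff_pointwise n k hn]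
  constructor
  · intro h j
    have hj : (j : ℕ) < k := j.isLt
    have := h (k - (j : ℕ)) (by omega) (by omega)
    unfold phi
    omega
  · intro h c h1 h2
    have hphi := h ⟨k - c, by omega⟩
    unfold phi at hphi
    simp only at hphi
    rw [show k - (k - c) = c by omega] at hphi
    have e1 := T.entry_pos 1 c le_rfl h1 (by rw [rowShape_one]; omega)
    have e2 := T'.entry_pos 1 c le_rfl h1 (by rw [rowShape_one]; omega)
    omega

def psi (n k : ℕ) (T : Tableau n (rowShape k)) : Set (Fin k × Fin n) :=
  {p | (p.2 : ℕ) < phi n k T p.1}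

lemma psi_lower (n k : ℕ) (T : Tableau n (rowShape k)) : IsLowerSet (psi n k T) := by
  rintro ⟨a, b⟩ ⟨a', b'⟩ hle hmem
  obtain ⟨h1, h2⟩ := Prod.mk_le_mk.mp hle
  have hb : (b' : ℕ) ≤ (b : ℕ) := h2
  have := phi_antitone n k T a' a h1
  simp only [psi, Set.mem_setOf_eq] at hmem ⊢
  omega

lemma psi_subset_iff (n k : ℕ) (T T' : Tableau n (rowShape k)) :
    psi n k T ⊆ psi n k T' ↔ ∀ j, phi n k T j ≤ phi n k T' j := by
  constructor
  · intro h a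
    by_contra hlt
    push_neg at hlt
    have hb : phi n k T' a < n := lt_of_lt_of_le hlt (phi_le n k T a)
    have hmem : (a, (⟨phi n k T' a, hb⟩ : Fin n)) ∈ psi n k T := by
      simp only [psi, Set.mem_setOf_eq]
      exact hlt
    have := h hmem
    simp only [psi, Set.mem_setOf_eq] at this
    omega
  · rintro h ⟨a, b⟩ hmem
    simp only [psi, Set.mem_setOf_eq] at hmem ⊢
    exact lt_of_lt_of_le hmem (h a)

lemma psi_injective (n k : ℕ) : Function.Injective (psi n k) := by
  intro T T' h
  apply phi_injective n k
  funext j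
  exact le_antisymm ((psi_subset_iff n k T T').mp h.le j)
    ((psi_subset_iff n k T' T).mp h.ge j)

lemma psi_surjective (n k : ℕ) (hk : 1 ≤ k) (S : Set (Fin k × Fin n))
    (hS : IsLowerSet S) : ∃ T, psi n k T = S := by
  classical
  set f : Fin k → ℕ := fun a => (Finset.univ.filter (fun b : Fin n => (a, b) ∈ S)).card
    with hf
  have key : ∀ (a : Fin k) (b : Fin n), (a, b) ∈ S ↔ (b : ℕ) < f a := by
    intro a b
    constructor
    · intro hb
      have hsub : Finset.Iic b ⊆ Finset.univ.filter (fun b' : Fin n => (a, b') ∈ S) := by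
        intro b' hb'
        simp only [Finset.mem_Iic] at hb'
        simp only [Finset.mem_filter, Finset.mem_univ, true_and]
        exact hS (Prod.mk_le_mk.mpr ⟨le_rfl, hb'⟩) hb
      have := Finset.card_le_card hsub
      rw [Fin.card_Iic] at this
      simp only [hf]
      omega
    · intro hb
      by_contra hbS
      have hsub : Finset.univ.filter (fun b' : Fin n => (a, b') ∈ S) ⊆ Finset.Iio b := by
        intro b' hb'
        simp only [Finset.mem_filter, Finset.mem_univ, true_and] at hb'
        simp only [Finset.mem_Iio]
        by_contra hle
        exact hbS (hS (Prod.mk_le_mk.mpr ⟨le_rfl, not_lt.mp hle⟩) hb')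
      have := Finset.card_le_card hsub
      rw [Fin.card_Iio] at this
      simp only [hf] at hb
      omega
  have hmono : ∀ i j : Fin k, i ≤ j → f j ≤ f i := by
    intro i j hij
    apply Finset.card_le_card
    intro b hb
    simp only [Finset.mem_filter, Finset.mem_univ, true_and] at hb ⊢
    exact hS (Prod.mk_le_mk.mpr ⟨hij, le_rfl⟩) hb
  have hb : ∀ j, f j ≤ n := by
    intro j
    calc f j ≤ Finset.univ.card := Finset.card_le_card (Finset.filter_subset _ _)
      _ = n := by simp
  refine ⟨ofFun n k hk f hmono hb, ?_⟩
  ext ⟨a, b⟩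
  simp only [psi, Set.mem_setOf_eq]
  rw [phi_surjective n k hk f hmono hb]
  exact (key a b).symm


/-- For `k ≥ 1`, the crystal order on `B_{(k)}^n` is componentwise
comparison of the row entries; the map `T ↦ (T(1,k)−1, …, T(1,1)−1)` is an order
isomorphism onto the partitions fitting inside a `k × n` box ordered by containment;
and `B_{(k)}^n` is order-isomorphic to the distributive lattice of order ideals
(lower sets) of the product of chains `[k] × [n]`. -/
theorem row_crystal_iso (n k : ℕ) (hn : 1 ≤ n) (hk : 1 ≤ k) :
    (∀ T T' : Tableau n (rowShape k),
      CrystalLE n (rowShape k) T T' ↔ ∀ j, 1 ≤ j → j ≤ k → T.entry 1 j ≤ T'.entry 1 j) ∧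
    (∃ φ : Tableau n (rowShape k) → (Fin k → ℕ),
      (∀ T (j : Fin k), φ T j = T.entry 1 (k - (j : ℕ)) - 1) ∧
      (∀ T (i j : Fin k), i ≤ j → φ T j ≤ φ T i) ∧
      (∀ T (j : Fin k), φ T j ≤ n) ∧
      Function.Injective φ ∧
      (∀ f : Fin k → ℕ, (∀ i j : Fin k, i ≤ j → f j ≤ f i) → (∀ j, f j ≤ n) →
        ∃ T, φ T = f) ∧
      (∀ T T', CrystalLE n (rowShape k) T T' ↔ ∀ j, φ T j ≤ φ T' j)) ∧
    (∃ ψ : Tableau n (rowShape k) → Set (Fin k × Fin n),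
      (∀ T, IsLowerSet (ψ T)) ∧ Function.Injective ψ ∧
      (∀ S : Set (Fin k × Fin n), IsLowerSet S → ∃ T, ψ T = S) ∧
      (∀ T T', CrystalLE n (rowShape k) T T' ↔ ψ T ⊆ ψ T')) := by
  refine ⟨fun T T' => crystalLE_iff_pointwise n k hn T T',
    ⟨phi n k, fun T j => rfl, phi_antitone n k, phi_le n k, phi_injective n k,
      fun f hm hb => ⟨ofFun n k hk f hm hb, phi_surjective n k hk f hm hb⟩,
      fun T T' => crystalLE_iff_phi n k hn hk T T'⟩,
    ⟨psi n k, psi_lower n k, psi_injective n k, psi_surjective n k hk,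
      fun T T' => by rw [crystalLE_iff_phi n k hn hk, psi_subset_iff n k T T']⟩⟩
end

section
/- Let λ = (λ_1,…,λ_ℓ) be a partition with ℓ parts, let t be a nonnegative integer with t < λ_ℓ, let μ = (λ_1−t,…,λ_ℓ−t) be the partition obtained by deleting the first t columns of the Young diagram of λ, and suppose n ≥ ℓ. Then B_μ^n is order-isomorphic to a principal order ideal of B_λ^n (i.e., to a set of the form {T : T ≤ X} for some X ∈ B_λ^n). In particular, if B_μ^n is not a lattice, then B_λ^n is not a lattice. -/
namespace CPI
open List

/-! ### Part 1: generic word lemmas -/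

lemma seg_eq (w : List ℕ) (j p : ℕ) : seg w j p = (w.take (p+1)).drop j := by
  simp [seg, List.drop_take]

lemma count_take_add_seg (w : List ℕ) (v j p : ℕ) (h : j ≤ p + 1) :
    (w.take j).count v + (seg w j p).count v = (w.take (p+1)).count v := by
  rw [seg_eq]
  conv_rhs => rw [← List.take_append_drop j (w.take (p+1))]
  rw [List.count_append, List.take_take, min_eq_left h]

lemma uc_iff (i : ℕ) (w : List ℕ) (p : ℕ) :
    UnmatchedClose i w p ↔ (w[p]? = some i ∧ ∀ j, j ≤ p →
      (w.take (p+1)).count (i+1) + (w.take j).count i <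
      (w.take (p+1)).count i + (w.take j).count (i+1)) := by
  unfold UnmatchedClose
  refine and_congr_right fun _ => ?_
  refine forall_congr' fun j => ?_
  refine imp_congr_right fun hj => ?_
  have h1 := count_take_add_seg w i j p (by omega)
  have h2 := count_take_add_seg w (i+1) j p (by omega)
  omega

lemma count_take_succ (w : List ℕ) (v m : ℕ) :
    (w.take (m+1)).count v = (w.take m).count v + (if w[m]? = some v then 1 else 0) := by
  rw [List.take_succ, List.count_append]
  congr 1
  cases h : w[m]? with
  | none => simp
  | some a =>
    by_cases hv : a = v
    · simp [hv]
    · simp [Option.toList, List.count_singleton', hv]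

lemma uc_lt_length {i : ℕ} {w : List ℕ} {p : ℕ} (h : UnmatchedClose i w p) :
    p < w.length := by
  have := h.1
  rw [List.getElem?_eq_some_iff] at this
  exact this.1

lemma count_take_mono (w : List ℕ) (v : ℕ) {a b : ℕ} (h : a ≤ b) :
    (w.take a).count v ≤ (w.take b).count v := by
  induction b with
  | zero => have : a = 0 := by omega
            simp [this]
  | succ b ih =>
    rcases Nat.lt_or_ge a (b+1) with h' | h'
    · rw [count_take_succ]
      have := ih (by omega)
      split <;> omega
    · have : a = b + 1 := by omega
      rw [this]

lemma uc_exists_iff (i : ℕ) (w : List ℕ) :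
    (∃ p, UnmatchedClose i w p) ↔ ∃ m, (w.take m).count (i+1) < (w.take m).count i := by
  constructor
  · rintro ⟨p, h⟩
    rw [uc_iff] at h
    have := h.2 0 (by omega)
    simp at this
    exact ⟨p+1, by omega⟩
  · rintro ⟨m, hm⟩
    classical
    have hex : ∃ m, (w.take m).count (i+1) < (w.take m).count i := ⟨m, hm⟩
    have hP : (w.take (Nat.find hex)).count (i+1) < (w.take (Nat.find hex)).count i :=
      Nat.find_spec hex
    have h1 : 1 ≤ Nat.find hex := by
      rcases Nat.eq_zero_or_pos (Nat.find hex) with h | h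
      · rw [h] at hP; simp at hP
      · exact h
    obtain ⟨p, hp⟩ : ∃ p, Nat.find hex = p + 1 := ⟨Nat.find hex - 1, by omega⟩
    rw [hp] at hP
    have hnot : ∀ j ≤ p, ¬ ((w.take j).count (i+1) < (w.take j).count i) := by
      intro j hj
      exact Nat.find_min hex (by omega)
    refine ⟨p, ?_⟩
    rw [uc_iff]
    have hci := count_take_succ w i p
    have hci1 := count_take_succ w (i+1) p
    have hp : w[p]? = some i := by
      have hnp := hnot p (le_refl p)
      by_contra hne
      rw [if_neg hne] at hci
      by_cases h2 : w[p]? = some (i+1) <;> [rw [if_pos h2] at hci1; rw [if_neg h2] at hci1] <;> omega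
    rw [hci, hci1, if_pos hp, if_neg (by rw [hp]; simp)] at hP
    constructor
    · exact hp
    · intro j hj
      have := hnot j hj
      rw [hci, hci1, if_pos hp, if_neg (by rw [hp]; simp)]
      omega

lemma uc_next {i : ℕ} {w : List ℕ} {p : ℕ} (h : UnmatchedClose i w p)
    (h2 : w[p+1]? = some i) : UnmatchedClose i w (p+1) := by
  rw [uc_iff] at h ⊢
  refine ⟨h2, fun j hj => ?_⟩
  have hci := count_take_succ w i (p+1)
  have hci1 := count_take_succ w (i+1) (p+1)
  rw [if_pos h2] at hci
  rw [if_neg (by rw [h2]; simp)] at hci1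
  rcases Nat.lt_or_ge j (p+1) with h' | h'
  · have := h.2 j (by omega)
    omega
  · have hj' : j = p + 1 := by omega
    subst hj'
    omega

end CPI

namespace CPI
open List

/-! ### Part 2: structure of the reading list -/

variable {n : ℕ} {sh : ℕ → ℕ}

def rowL (n : ℕ) (sh : ℕ → ℕ) (T : Tableau n sh) (r : ℕ) : List ((ℕ × ℕ) × ℕ) :=
  (List.range (sh r)).map fun j => ((r, j + 1), T.entry r (j + 1))

def RL (n : ℕ) (sh : ℕ → ℕ) (T : Tableau n sh) : ℕ → List ((ℕ × ℕ) × ℕ)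
  | 0 => []
  | r + 1 => rowL n sh T (r + 1) ++ RL n sh T r

lemma length_rowL (T : Tableau n sh) (r : ℕ) : (rowL n sh T r).length = sh r := by
  simp [rowL]

lemma readingList_eq_RL (T : Tableau n sh) : readingList n sh T = RL n sh T n := by
  have key : ∀ m, ((List.range m).map fun k =>
      (List.range (sh (m - k))).map fun j => ((m - k, j + 1), T.entry (m - k) (j + 1))).flatten
      = RL n sh T m := by
    intro m
    induction m with
    | zero => simp [RL]
    | succ m ih =>
      rw [List.range_succ_eq_map]
      simp only [List.map_cons, List.map_map, List.flatten_cons, Nat.sub_zero]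
      rw [show RL n sh T (m+1) = rowL n sh T (m+1) ++ RL n sh T m from rfl]
      congr 1
      rw [← ih]
      congr 1
      apply List.map_congr_left
      intro k hk
      simp only [Function.comp, Nat.succ_sub_succ]
  exact key n

lemma length_RL_succ (T : Tableau n sh) (r : ℕ) :
    (RL n sh T (r+1)).length = sh (r+1) + (RL n sh T r).length := by
  show (rowL n sh T (r+1) ++ RL n sh T r).length = _
  rw [List.length_append, length_rowL]

lemma length_RL_mono (T : Tableau n sh) {a b : ℕ} (h : a ≤ b) :
    (RL n sh T a).length ≤ (RL n sh T b).length := by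
  induction b with
  | zero => have : a = 0 := by omega
            rw [this]
  | succ b ih =>
    rcases Nat.lt_or_ge a (b+1) with h' | h'
    · have := ih (by omega)
      rw [length_RL_succ]
      omega
    · have : a = b + 1 := by omega
      rw [this]

def off (n : ℕ) (sh : ℕ → ℕ) (T : Tableau n sh) (r : ℕ) : ℕ :=
  (RL n sh T n).length - (RL n sh T r).length

lemma off_n (T : Tableau n sh) : off n sh T n = 0 := by
  simp [off]

lemma off_succ (T : Tableau n sh) {r : ℕ} (h : r < n) :
    off n sh T r = off n sh T (r+1) + sh (r+1) := by
  have h1 := length_RL_succ T r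
  have h2 := length_RL_mono T (show r + 1 ≤ n by omega)
  simp only [off]
  omega

lemma off_anti (T : Tableau n sh) {a b : ℕ} (h : a ≤ b) :
    off n sh T b ≤ off n sh T a := by
  have := length_RL_mono T h
  simp only [off]
  omega

lemma off_zero (T : Tableau n sh) : off n sh T 0 = (RL n sh T n).length := by
  simp [off, RL]

lemma length_word (T : Tableau n sh) :
    (word n sh T).length = off n sh T 0 := by
  rw [word, List.length_map, readingList_eq_RL, off_zero]

lemma drop_RL (T : Tableau n sh) : ∀ r, r ≤ n →
    (RL n sh T n).drop (off n sh T r) = RL n sh T r := by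
  have H : ∀ d, d ≤ n → (RL n sh T n).drop (off n sh T (n - d)) = RL n sh T (n - d) := by
    intro d
    induction d with
    | zero => intro _
              simp [off_n T]
    | succ d ih =>
      intro hd
      have h1 : n - d = (n - (d+1)) + 1 := by omega
      have ih' := ih (by omega)
      have hoff : off n sh T (n - (d+1)) = off n sh T (n - d) + sh (n - d) := by
        rw [h1, off_succ T (by omega), ← h1]
      have hsplit : (RL n sh T n).drop (off n sh T (n - (d+1)))
          = ((RL n sh T n).drop (off n sh T (n - d))).drop (sh (n - d)) := by
        rw [List.drop_drop, ← hoff]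
      rw [hsplit, ih', h1]
      rw [show RL n sh T ((n - (d+1)) + 1) = rowL n sh T ((n-(d+1))+1) ++ RL n sh T (n-(d+1)) from rfl]
      rw [← h1, ← length_rowL T (n - d)]
      conv_lhs => rw [h1]
      rw [List.drop_left]
  intro r hr
  have := H (n - r) (by omega)
  rw [show n - (n - r) = r by omega] at this
  exact this

lemma RL_unfold (T : Tableau n sh) {r : ℕ} (h : 1 ≤ r) :
    RL n sh T r = rowL n sh T r ++ RL n sh T (r-1) := by
  obtain ⟨r', rfl⟩ : ∃ r', r = r' + 1 := ⟨r - 1, by omega⟩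
  rfl

lemma rl_get (T : Tableau n sh) {r j : ℕ} (hr1 : 1 ≤ r) (hrn : r ≤ n) (hj : j < sh r) :
    (readingList n sh T)[off n sh T r + j]? = some ((r, j+1), T.entry r (j+1)) := by
  rw [readingList_eq_RL, ← List.getElem?_drop, drop_RL T r hrn, RL_unfold T hr1,
    List.getElem?_append, if_pos (by rw [length_rowL]; exact hj)]
  rw [rowL, List.getElem?_map, List.getElem?_range hj]
  rfl

lemma rl_elim_aux (T : Tableau n sh) : ∀ r, r ≤ n → ∀ p x, (RL n sh T r)[p]? = some x →
    ∃ r' j, 1 ≤ r' ∧ r' ≤ r ∧ j < sh r' ∧ x = ((r', j+1), T.entry r' (j+1)) ∧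
      off n sh T r + p = off n sh T r' + j := by
  intro r
  induction r with
  | zero => intro _ p x h
            simp [RL] at h
  | succ r ih =>
    intro hr p x h
    rw [show RL n sh T (r+1) = rowL n sh T (r+1) ++ RL n sh T r from rfl,
      List.getElem?_append] at h
    by_cases hp : p < (rowL n sh T (r+1)).length
    · rw [if_pos hp] at h
      rw [length_rowL] at hp
      refine ⟨r+1, p, by omega, le_refl _, hp, ?_, rfl⟩
      rw [rowL, List.getElem?_map, List.getElem?_range hp] at h
      simp at h
      exact h.symm
    · rw [if_neg hp, length_rowL] at h
      rw [length_rowL] at hp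
      obtain ⟨r', j, h1, h2, h3, h4, h5⟩ := ih (by omega) _ _ h
      refine ⟨r', j, h1, by omega, h3, h4, ?_⟩
      have := off_succ T (show r < n by omega)
      omega

lemma rl_elim (T : Tableau n sh) {p : ℕ} {x : (ℕ × ℕ) × ℕ}
    (h : (readingList n sh T)[p]? = some x) :
    ∃ r j, 1 ≤ r ∧ r ≤ n ∧ j < sh r ∧ x = ((r, j+1), T.entry r (j+1)) ∧
      p = off n sh T r + j := by
  rw [readingList_eq_RL] at h
  obtain ⟨r, j, h1, h2, h3, h4, h5⟩ := rl_elim_aux T n (le_refl n) p x h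
  rw [off_n T] at h5
  exact ⟨r, j, h1, h2, h3, h4, by omega⟩

lemma word_get (T : Tableau n sh) (p : ℕ) :
    (word n sh T)[p]? = ((readingList n sh T)[p]?).map Prod.snd := by
  rw [word, List.getElem?_map]

/-! ### counting in the word -/

def wct (T : Tableau n sh) (v m : ℕ) : ℕ := ((word n sh T).take m).count v

def acnt (T : Tableau n sh) (v r : ℕ) : ℕ := wct T v (off n sh T r)

def rcnt (T : Tableau n sh) (v r : ℕ) : ℕ → ℕ
  | 0 => 0
  | c + 1 => rcnt T v r c + (if c + 1 ≤ sh r ∧ T.entry r (c+1) = v then 1 else 0)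

lemma rcnt_eq (T : Tableau n sh) (v r c : ℕ) :
    (((rowL n sh T r).map Prod.snd).take c).count v = rcnt T v r c := by
  induction c with
  | zero => simp [rcnt]
  | succ c ih =>
    rw [count_take_succ, ih, rcnt]
    congr 1
    rw [List.getElem?_map]
    by_cases hc : c < sh r
    · rw [rowL, List.getElem?_map, List.getElem?_range hc]
      simp only [Option.map_some]
      by_cases hv : T.entry r (c+1) = v
      · rw [if_pos (by simp [hv]), if_pos ⟨by omega, hv⟩]
      · rw [if_neg (by simp [hv]), if_neg (by intro hh; exact hv hh.2)]
    · have : (rowL n sh T r)[c]? = none := by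
        rw [List.getElem?_eq_none_iff, length_rowL]
        omega
      rw [this]
      simp only [Option.map_none]
      rw [if_neg (by simp), if_neg (by intro hh; omega)]

lemma wct_split (T : Tableau n sh) (v : ℕ) {r c : ℕ} (hr1 : 1 ≤ r) (hrn : r ≤ n)
    (hc : c ≤ sh r) :
    wct T v (off n sh T r + c) = acnt T v r + rcnt T v r c := by
  unfold wct acnt wct
  rw [List.take_add, List.count_append]
  congr 1
  rw [word, ← List.map_drop, readingList_eq_RL, drop_RL T r hrn, RL_unfold T hr1,
    List.map_append, List.take_append, ← List.map_take,
    show c - ((rowL n sh T r).map Prod.snd).length = 0 by rw [List.length_map, length_rowL]; omega]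
  rw [List.take_zero, List.append_nil, List.map_take, rcnt_eq]

lemma acnt_n (T : Tableau n sh) (v : ℕ) : acnt T v n = 0 := by
  simp [acnt, off_n, wct]

lemma acnt_succ (T : Tableau n sh) (v : ℕ) {r : ℕ} (h : r < n) :
    acnt T v r = acnt T v (r+1) + rcnt T v (r+1) (sh (r+1)) := by
  have := wct_split T v (show 1 ≤ r+1 by omega) (show r+1 ≤ n by omega) (le_refl (sh (r+1)))
  rw [← this, acnt, off_succ T h]

lemma wct_big (T : Tableau n sh) (v : ℕ) {m : ℕ} (h : (word n sh T).length ≤ m) :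
    wct T v m = wct T v (word n sh T).length := by
  unfold wct
  rw [List.take_of_length_le h, List.take_of_length_le (le_refl _)]

lemma decomp (T : Tableau n sh) {m : ℕ} (hm : m < (word n sh T).length) :
    ∃ r c, 1 ≤ r ∧ r ≤ n ∧ c < sh r ∧ m = off n sh T r + c ∧
      ∀ r', off n sh T r' ≤ m → r ≤ r' := by
  classical
  have hex : ∃ r, off n sh T r ≤ m := ⟨n, by rw [off_n]; omega⟩
  set r := Nat.find hex with hr
  have hspec : off n sh T r ≤ m := Nat.find_spec hex
  have hrn : r ≤ n := Nat.find_min' hex (by rw [off_n]; omega)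
  have hr1 : 1 ≤ r := by
    rcases Nat.eq_zero_or_pos r with h | h
    · exfalso
      rw [h] at hspec
      rw [length_word] at hm
      omega
    · exact h
  have hmin : ∀ r', off n sh T r' ≤ m → r ≤ r' := fun r' h' => Nat.find_min' hex h'
  have hprev : ¬ off n sh T (r-1) ≤ m := by
    intro hcon
    have := hmin (r-1) hcon
    omega
  have hrec : off n sh T (r-1) = off n sh T r + sh r := by
    have := off_succ T (show r - 1 < n by omega)
    rw [show r - 1 + 1 = r by omega] at this
    exact this
  exact ⟨r, m - off n sh T r, hr1, hrn, by omega, by omega, hmin⟩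

end CPI

namespace CPI
open List

variable {n : ℕ} {sh : ℕ → ℕ}

/-! ### Part 3a: rcnt evaluation lemmas -/

lemma rcnt_mono (T : Tableau n sh) (v r : ℕ) {a b : ℕ} (h : a ≤ b) :
    rcnt T v r a ≤ rcnt T v r b := by
  induction b with
  | zero => have : a = 0 := by omega
            rw [this]
  | succ b ih =>
    rcases Nat.lt_or_ge a (b+1) with h' | h'
    · have := ih (by omega)
      rw [rcnt]
      omega
    · have : a = b + 1 := by omega
      rw [this]

lemma rcnt_le_add (T : Tableau n sh) (v r : ℕ) {a b : ℕ} (h : a ≤ b) :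
    rcnt T v r b ≤ rcnt T v r a + (b - a) := by
  induction b with
  | zero => have : a = 0 := by omega
            rw [this]; omega
  | succ b ih =>
    rcases Nat.lt_or_ge a (b+1) with h' | h'
    · have := ih (by omega)
      rw [rcnt]
      split <;> omega
    · have : a = b + 1 := by omega
      rw [this]; omega

lemma rcnt_stable (T : Tableau n sh) (v r : ℕ) {a b : ℕ} (h : a ≤ b)
    (hne : ∀ c', a < c' → c' ≤ b → c' ≤ sh r → T.entry r c' ≠ v) :
    rcnt T v r b = rcnt T v r a := by
  induction b with
  | zero => have : a = 0 := by omega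
            rw [this]
  | succ b ih =>
    rcases Nat.lt_or_ge a (b+1) with h' | h'
    · have ihb := ih (by omega) (fun c' h1 h2 h3 => hne c' h1 (by omega) h3)
      rw [rcnt, ihb, if_neg (fun hh => hne (b+1) (by omega) (le_refl _) hh.1 hh.2)]
      omega
    · have : a = b + 1 := by omega
      rw [this]

lemma rcnt_run (T : Tableau n sh) (v r : ℕ) {a b : ℕ} (h : a ≤ b) (hb : b ≤ sh r)
    (hv : ∀ c', a < c' → c' ≤ b → T.entry r c' = v) :
    rcnt T v r b = rcnt T v r a + (b - a) := by
  induction b with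
  | zero => have : a = 0 := by omega
            rw [this]
            omega
  | succ b ih =>
    rcases Nat.lt_or_ge a (b+1) with h' | h'
    · have ihb := ih (by omega) (by omega) (fun c' h1 h2 => hv c' h1 (by omega))
      rw [rcnt, ihb, if_pos ⟨hb, hv (b+1) (by omega) (le_refl _)⟩]
      omega
    · have : a = b + 1 := by omega
      rw [this]; omega

lemma rcnt_zero_of (T : Tableau n sh) (v r : ℕ) {b : ℕ}
    (hne : ∀ c', 1 ≤ c' → c' ≤ b → c' ≤ sh r → T.entry r c' ≠ v) :
    rcnt T v r b = 0 := by
  have := rcnt_stable T v r (Nat.zero_le b) (fun c' h1 h2 h3 => hne c' (by omega) h2 h3)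
  rw [this, rcnt]

lemma rcnt_full (T : Tableau n sh) (v r : ℕ) {b : ℕ} (h : sh r ≤ b) :
    rcnt T v r b = rcnt T v r (sh r) := by
  apply rcnt_stable T v r h
  intro c' h1 h2 h3
  omega

lemma rcnt_card (T : Tableau n sh) (v r c : ℕ) :
    rcnt T v r c = ((Finset.Icc 1 c).filter (fun c' => c' ≤ sh r ∧ T.entry r c' = v)).card := by
  induction c with
  | zero => simp [rcnt]
  | succ c ih =>
    have hins : Finset.Icc 1 (c+1) = insert (c+1) (Finset.Icc 1 c) := by
      rw [← Finset.Ico_add_one_right_eq_Icc]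
      exact (Finset.Ico_insert_right (by omega)).symm
    rw [rcnt, ih, hins, Finset.filter_insert]
    by_cases hc : c + 1 ≤ sh r ∧ T.entry r (c+1) = v
    · rw [if_pos hc, if_pos hc, Finset.card_insert_of_notMem (by simp)]
    · rw [if_neg hc, if_neg hc, Nat.add_zero]

/-! ### Part 3b: generic tableau lemmas -/

lemma sh_anti (hanti : ∀ i, 1 ≤ i → sh (i + 1) ≤ sh i) {a b : ℕ} (ha : 1 ≤ a) (hab : a ≤ b) :
    sh b ≤ sh a := by
  induction b with
  | zero => have : a = 0 := by omega
            omega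
  | succ b ih =>
    rcases Nat.lt_or_ge a (b+1) with h' | h'
    · have h1 := ih (by omega)
      have h2 := hanti b (by omega)
      omega
    · have : a = b + 1 := by omega
      rw [this]

lemma row_mono (T : Tableau n sh) {r c₁ c₂ : ℕ} (hr : 1 ≤ r) (hc1 : 1 ≤ c₁)
    (h12 : c₁ ≤ c₂) (h2 : c₂ ≤ sh r) : T.entry r c₁ ≤ T.entry r c₂ := by
  induction c₂ with
  | zero => have : c₁ = 0 := by omega
            omega
  | succ c ih =>
    rcases Nat.lt_or_ge c₁ (c+1) with h' | h'
    · have h1 := ih (by omega) (by omega)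
      have h2 := T.row_weak r c hr (by omega) h2
      omega
    · have : c₁ = c + 1 := by omega
      rw [this]

lemma entry_ge_row (hanti : ∀ i, 1 ≤ i → sh (i + 1) ≤ sh i) (T : Tableau n sh)
    {r c : ℕ} (hr : 1 ≤ r) (hc : 1 ≤ c) (hcs : c ≤ sh r) : r ≤ T.entry r c := by
  induction r with
  | zero => omega
  | succ r ih =>
    rcases Nat.eq_zero_or_pos r with h | h
    · rw [h]
      exact T.entry_pos 1 c (by omega) hc (by rwa [h] at hcs)
    · have hshr : c ≤ sh r := le_trans hcs (sh_anti hanti h (by omega))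
      have h1 := ih h hshr
      have h2 := T.col_strict r c h hc hshr hcs
      omega

lemma tab_ext {T T' : Tableau n sh} (h : ∀ r c, T.entry r c = T'.entry r c) : T = T' := by
  have he : T.entry = T'.entry := by
    funext r c
    exact h r c
  cases T
  cases T'
  simp only at he
  subst he
  rfl

end CPI

namespace CPI
open List

variable {n : ℕ} {sh : ℕ → ℕ}

/-! ### Part 4: constructing a cover from a bad prefix -/

def Phi (T : Tableau n sh) : ℕ := ∑ r ∈ Finset.Icc 1 n, ∑ c ∈ Finset.Icc 1 (sh r), T.entry r c

lemma Phi_le (T : Tableau n sh) : Phi T ≤ ∑ r ∈ Finset.Icc 1 n, (n+1) * sh r := by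
  apply Finset.sum_le_sum
  intro r hr
  rw [Finset.mem_Icc] at hr
  calc ∑ c ∈ Finset.Icc 1 (sh r), T.entry r c
      ≤ ∑ _c ∈ Finset.Icc 1 (sh r), (n+1) := by
        apply Finset.sum_le_sum
        intro c hc
        rw [Finset.mem_Icc] at hc
        exact T.entry_le r c hr.1 hc.1 hc.2
    _ = (n+1) * sh r := by
        rw [Finset.sum_const, Nat.card_Icc]
        simp [Nat.mul_comm]

lemma exists_cover_of_bad {ℓ : ℕ} (hℓn : ℓ ≤ n)
    (hbd : ∀ r, ℓ < r → sh r = 0)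
    (T : Tableau n sh) {i : ℕ} (hi1 : 1 ≤ i) (hin : i ≤ n)
    (hbad : ∃ m, ((word n sh T).take m).count (i+1) < ((word n sh T).take m).count i) :
    ∃ T' : Tableau n sh, CrystalCover n sh T T' ∧ Phi T' = Phi T + 1 := by
  classical
  obtain ⟨p, hp⟩ := (uc_exists_iff i (word n sh T)).mpr hbad
  set w := word n sh T with hwdef
  set pm := Nat.findGreatest (UnmatchedClose i w) w.length with hpm
  have hpmax : UnmatchedClose i w pm :=
    Nat.findGreatest_spec (le_of_lt (uc_lt_length hp)) hp
  have hmax : ∀ q, pm < q → ¬ UnmatchedClose i w q := by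
    intro q hq huc
    rcases Nat.lt_or_ge q (w.length + 1) with h' | h'
    · exact Nat.findGreatest_is_greatest hq (by omega) huc
    · have := uc_lt_length huc
      omega
  -- identify the cell
  have hw1 := hpmax.1
  rw [hwdef, word_get] at hw1
  cases hx : (readingList n sh T)[pm]? with
  | none => rw [hx] at hw1; simp at hw1
  | some x =>
  rw [hx] at hw1
  simp only [Option.map_some, Option.some.injEq] at hw1
  obtain ⟨r₀, j₀, hr₀1, hr₀n, hj₀, hxval, hposn⟩ := rl_elim T hx
  have hent : T.entry r₀ (j₀+1) = i := by rw [hxval] at hw1; exact hw1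
  set c₀ := j₀ + 1 with hc₀
  have hc₀1 : 1 ≤ c₀ := by omega
  have hc₀sh : c₀ ≤ sh r₀ := by omega
  -- right neighbour is not i
  have hR : c₀ + 1 ≤ sh r₀ → T.entry r₀ (c₀ + 1) ≠ i := by
    intro hsh hcon
    apply hmax (pm + 1) (by omega)
    apply uc_next hpmax
    have := rl_get T hr₀1 hr₀n (show j₀ + 1 < sh r₀ by omega)
    rw [hwdef, word_get, show pm + 1 = off n sh T r₀ + (j₀ + 1) by omega, this]
    simp only [Option.map_some, Option.some.injEq]
    exact hcon
  -- the cell below does not contain i+1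
  have hB : T.entry (r₀ + 1) c₀ ≠ i + 1 := by
    intro hcon
    have hc₀sh' : c₀ ≤ sh (r₀ + 1) := by
      by_contra hcc
      rw [T.zero_outside (r₀+1) c₀ (by right; right; omega)] at hcon
      omega
    have hrₗ : r₀ + 1 ≤ ℓ := by
      by_contra hcc
      have := hbd (r₀+1) (by omega)
      omega
    have hr₀n' : r₀ + 1 ≤ n := by omega
    -- least column containing i in row r₀
    have hexe : ∃ c', 1 ≤ c' ∧ T.entry r₀ c' = i := ⟨c₀, hc₀1, hent⟩
    set e₀ := Nat.find hexe with he₀def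
    obtain ⟨he₀1, he₀⟩ : 1 ≤ e₀ ∧ T.entry r₀ e₀ = i := Nat.find_spec hexe
    have he₀min : ∀ c', c' < e₀ → 1 ≤ c' → T.entry r₀ c' ≠ i := by
      intro c' h1 h2 h3
      exact Nat.find_min hexe h1 ⟨h2, h3⟩
    have he₀c₀ : e₀ ≤ c₀ := Nat.find_min' hexe ⟨hc₀1, hent⟩
    -- segment inequality at j = off (r₀+1) + (e₀ - 1)
    have hoffr := off_succ T (show r₀ < n by omega)
    have hseg := (uc_iff i w pm).mp hpmax |>.2 (off n sh T (r₀+1) + (e₀ - 1))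
      (by omega)
    rw [hwdef] at hseg
    have hsplit1 : ∀ v, ((word n sh T).take (pm+1)).count v = acnt T v r₀ + rcnt T v r₀ c₀ := by
      intro v
      have := wct_split T v hr₀1 hr₀n hc₀sh
      rw [show pm + 1 = off n sh T r₀ + c₀ by omega]
      exact this
    have hsplit2 : ∀ v, ((word n sh T).take (off n sh T (r₀+1) + (e₀-1))).count v
        = acnt T v (r₀+1) + rcnt T v (r₀+1) (e₀-1) := by
      intro v
      exact wct_split T v (by omega) hr₀n' (by omega)
    have hacnt : ∀ v, acnt T v r₀ = acnt T v (r₀+1) + rcnt T v (r₀+1) (sh (r₀+1)) :=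
      fun v => acnt_succ T v (show r₀ < n by omega)
    -- (f1) no i in row r₀+1 from e₀ on
    have hf1 : rcnt T i (r₀+1) (sh (r₀+1)) = rcnt T i (r₀+1) (e₀-1) := by
      apply rcnt_stable T i (r₀+1) (by omega)
      intro c' h1 h2 h3 hcv
      have h4 : T.entry (r₀+1) e₀ ≤ T.entry (r₀+1) c' := row_mono T (by omega) he₀1 (by omega) h3
      have h5 : T.entry r₀ e₀ < T.entry (r₀+1) e₀ :=
        T.col_strict r₀ e₀ hr₀1 he₀1 (by omega) (by omega)
      omega
    -- (f2) run of i+1 in row r₀+1 on [e₀, c₀]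
    have hf2 : rcnt T (i+1) (r₀+1) c₀ = rcnt T (i+1) (r₀+1) (e₀-1) + (c₀ - (e₀-1)) := by
      apply rcnt_run T (i+1) (r₀+1) (by omega) hc₀sh'
      intro c' h1 h2
      have h4 : T.entry (r₀+1) e₀ ≤ T.entry (r₀+1) c' := row_mono T (by omega) he₀1 (by omega) (by omega)
      have h5 : T.entry r₀ e₀ < T.entry (r₀+1) e₀ :=
        T.col_strict r₀ e₀ hr₀1 he₀1 (by omega) (by omega)
      have h6 : T.entry (r₀+1) c' ≤ T.entry (r₀+1) c₀ := row_mono T (by omega) (by omega) h2 hc₀sh'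
      omega
    have hf2' : rcnt T (i+1) (r₀+1) c₀ ≤ rcnt T (i+1) (r₀+1) (sh (r₀+1)) :=
      rcnt_mono T (i+1) (r₀+1) hc₀sh'
    -- (f3) at most c₀ - e₀ + 1 copies of i in row r₀ up to c₀
    have hf3 : rcnt T i r₀ c₀ ≤ c₀ - (e₀ - 1) := by
      have hz : rcnt T i r₀ (e₀-1) = 0 := by
        apply rcnt_zero_of
        intro c' h1 h2 h3
        exact he₀min c' (by omega) h1
      have := rcnt_le_add T i r₀ (show e₀ - 1 ≤ c₀ by omega)
      omega
    rw [hsplit1 i, hsplit1 (i+1), hsplit2 i, hsplit2 (i+1), hacnt i, hacnt (i+1)] at hseg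
    omega
  -- build T'
  refine ⟨⟨fun r c => if r = r₀ ∧ c = c₀ then i + 1 else T.entry r c, ?_, ?_, ?_, ?_, ?_⟩, ?_, ?_⟩
  · intro r c h1 h2 h3
    split
    · omega
    · exact T.entry_pos r c h1 h2 h3
  · intro r c h1 h2 h3
    split
    · omega
    · exact T.entry_le r c h1 h2 h3
  · intro r c h1 h2 h3
    by_cases hcell : r = r₀ ∧ c = c₀
    · obtain ⟨he1, he2⟩ := hcell
      rw [if_pos ⟨he1, he2⟩, if_neg (by rintro ⟨-, hh⟩; omega)]
      rw [he1, he2] at h3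
      have h6 := hR h3
      have h7 : T.entry r₀ c₀ ≤ T.entry r₀ (c₀+1) :=
        T.row_weak r₀ c₀ (by omega) (by omega) h3
      rw [he1, he2]
      omega
    · rw [if_neg hcell]
      by_cases hcell2 : r = r₀ ∧ c + 1 = c₀
      · obtain ⟨he1, he2⟩ := hcell2
        rw [if_pos ⟨he1, he2⟩]
        have h4 := T.row_weak r c h1 h2 h3
        have h5 : T.entry r (c+1) = i := by rw [he1, he2, hent]
        omega
      · rw [if_neg hcell2]
        exact T.row_weak r c h1 h2 h3
  · intro r c h1 h2 h3 h4
    by_cases hcell : r = r₀ ∧ c = c₀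
    · obtain ⟨he1, he2⟩ := hcell
      rw [if_pos ⟨he1, he2⟩, if_neg (by rintro ⟨hh, -⟩; omega)]
      have h5 := T.col_strict r c h1 h2 h3 h4
      have h6 : T.entry r c = i := by rw [he1, he2, hent]
      have h7 : T.entry (r+1) c ≠ i + 1 := by rw [he1, he2]; exact hB
      omega
    · rw [if_neg hcell]
      by_cases hcell2 : r + 1 = r₀ ∧ c = c₀
      · obtain ⟨he1, he2⟩ := hcell2
        rw [if_pos ⟨he1, he2⟩]
        have h5 := T.col_strict r c h1 h2 h3 h4
        have h6 : T.entry (r+1) c = i := by rw [he1, he2, hent]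
        omega
      · rw [if_neg hcell2]
        exact T.col_strict r c h1 h2 h3 h4
  · intro r c h1
    rw [if_neg (by rintro ⟨rfl, rfl⟩; omega)]
    exact T.zero_outside r c h1
  · refine ⟨i, hi1, hin, pm, hpmax, hmax, r₀, c₀, ?_, fun r' c' => rfl⟩
    rw [hx, hxval, hent]
  · -- Phi increases by one
    show (∑ r ∈ Finset.Icc 1 n, ∑ c ∈ Finset.Icc 1 (sh r),
      (if r = r₀ ∧ c = c₀ then i + 1 else T.entry r c)) = Phi T + 1
    have hrow : ∀ r ∈ Finset.Icc 1 n,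
        (∑ c ∈ Finset.Icc 1 (sh r), (if r = r₀ ∧ c = c₀ then i + 1 else T.entry r c))
        = (∑ c ∈ Finset.Icc 1 (sh r), T.entry r c) + (if r = r₀ then 1 else 0) := by
      intro r _
      by_cases hr : r = r₀
      · rw [if_pos hr]
        have hc₀mem : c₀ ∈ Finset.Icc 1 (sh r) := by
          rw [Finset.mem_Icc, hr]
          omega
        rw [← Finset.add_sum_erase (Finset.Icc 1 (sh r))
              (fun c => if r = r₀ ∧ c = c₀ then i + 1 else T.entry r c) hc₀mem,
            ← Finset.add_sum_erase (Finset.Icc 1 (sh r)) (fun c => T.entry r c) hc₀mem]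
        have hcong : ∀ c ∈ (Finset.Icc 1 (sh r)).erase c₀,
            (if r = r₀ ∧ c = c₀ then i + 1 else T.entry r c) = T.entry r c := by
          intro c hc
          rw [Finset.mem_erase] at hc
          rw [if_neg (by rintro ⟨_, rfl⟩; exact hc.1 rfl)]
        rw [Finset.sum_congr rfl hcong, if_pos ⟨hr, rfl⟩]
        have : T.entry r c₀ = i := by rw [hr, hent]
        have hsum : ∑ x ∈ (Finset.Icc 1 (sh r)).erase c₀, T.entry r x
            = ((Finset.Icc 1 (sh r)).erase c₀).sum (T.entry r) := rfl
        omega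
      · rw [if_neg hr, Nat.add_zero]
        exact Finset.sum_congr rfl (fun c _ => by
          rw [if_neg (by rintro ⟨rfl, _⟩; exact hr rfl)])
    rw [Finset.sum_congr rfl hrow, Finset.sum_add_distrib]
    rw [Finset.sum_ite_eq' (Finset.Icc 1 n) r₀ (fun _ => 1)]
    rw [if_pos (by rw [Finset.mem_Icc]; omega)]
    rfl

end CPI

namespace CPI
open List

variable {n : ℕ} {sh : ℕ → ℕ} {ℓ : ℕ}

/-! ### Part 5: the top tableau -/

def colLen (sh : ℕ → ℕ) (ℓ c : ℕ) : ℕ :=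
  ((Finset.Icc 1 ℓ).filter (fun r => c ≤ sh r)).card

lemma colLen_le (sh : ℕ → ℕ) (ℓ c : ℕ) : colLen sh ℓ c ≤ ℓ := by
  have := Finset.card_filter_le (Finset.Icc 1 ℓ) (fun r => c ≤ sh r)
  rw [Nat.card_Icc] at this
  unfold colLen
  omega

lemma colLen_iff (hanti : ∀ i, 1 ≤ i → sh (i+1) ≤ sh i) (hbd : ∀ r, ℓ < r → sh r = 0)
    {r c : ℕ} (hr : 1 ≤ r) (hc : 1 ≤ c) : c ≤ sh r ↔ r ≤ colLen sh ℓ c := by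
  constructor
  · intro h
    have hrℓ : r ≤ ℓ := by
      by_contra hh
      have := hbd r (by omega)
      omega
    have hsub : Finset.Icc 1 r ⊆ (Finset.Icc 1 ℓ).filter (fun r' => c ≤ sh r') := by
      intro r' hr'
      rw [Finset.mem_Icc] at hr'
      rw [Finset.mem_filter, Finset.mem_Icc]
      exact ⟨⟨hr'.1, by omega⟩, le_trans h (sh_anti hanti hr'.1 hr'.2)⟩
    have hcard := Finset.card_le_card hsub
    rw [Nat.card_Icc] at hcard
    unfold colLen
    omega
  · intro h
    by_contra hh
    push_neg at hh
    have hsub : (Finset.Icc 1 ℓ).filter (fun r' => c ≤ sh r') ⊆ Finset.Icc 1 (r-1) := by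
      intro r' hr'
      rw [Finset.mem_filter, Finset.mem_Icc] at hr'
      rw [Finset.mem_Icc]
      refine ⟨hr'.1.1, ?_⟩
      by_contra hh2
      have : sh r' ≤ sh r := sh_anti hanti hr (by omega)
      omega
    have hcard := Finset.card_le_card hsub
    rw [Nat.card_Icc] at hcard
    have hcl : colLen sh ℓ c ≤ r - 1 := by
      unfold colLen
      omega
    omega

lemma colLen_anti (sh : ℕ → ℕ) (ℓ : ℕ) {c c' : ℕ} (h : c ≤ c') :
    colLen sh ℓ c' ≤ colLen sh ℓ c :=
  Finset.card_le_card (Finset.monotone_filter_right _ (fun r _ hcr => le_trans h hcr))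

lemma card_colLen_eq (hanti : ∀ i, 1 ≤ i → sh (i+1) ≤ sh i) (hbd : ∀ r, ℓ < r → sh r = 0)
    {B L : ℕ} (hL1 : 1 ≤ L) (hBL : sh L ≤ B) :
    ((Finset.Icc 1 B).filter (fun c => colLen sh ℓ c = L)).card = sh L - sh (L+1) := by
  have hset : (Finset.Icc 1 B).filter (fun c => colLen sh ℓ c = L)
      = Finset.Ioc (sh (L+1)) (sh L) := by
    ext c
    rw [Finset.mem_filter, Finset.mem_Icc, Finset.mem_Ioc]
    constructor
    · rintro ⟨⟨h1, h2⟩, h3⟩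
      have hLe : c ≤ sh L := (colLen_iff hanti hbd hL1 h1).mpr (by omega)
      have hgt : ¬ c ≤ sh (L+1) := fun hcon => by
        have := (colLen_iff hanti hbd (by omega) h1).mp hcon
        omega
      omega
    · rintro ⟨h1, h2⟩
      have hc1 : 1 ≤ c := by omega
      refine ⟨⟨hc1, by omega⟩, ?_⟩
      have hge : L ≤ colLen sh ℓ c := (colLen_iff hanti hbd hL1 hc1).mp h2
      have hlt : ¬ (L+1 ≤ colLen sh ℓ c) := fun hcon => by
        have := (colLen_iff hanti hbd (by omega) hc1).mpr hcon
        omega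
      omega
  rw [hset, Nat.card_Ioc]

def TopEntry (n : ℕ) (sh : ℕ → ℕ) (ℓ : ℕ) (r c : ℕ) : ℕ :=
  if 1 ≤ r ∧ 1 ≤ c ∧ c ≤ sh r then n + 1 + r - colLen sh ℓ c else 0

def Ttop (n : ℕ) (sh : ℕ → ℕ) (ℓ : ℕ) (hℓn : ℓ ≤ n)
    (hanti : ∀ i, 1 ≤ i → sh (i+1) ≤ sh i) (hbd : ∀ r, ℓ < r → sh r = 0) :
    Tableau n sh where
  entry := TopEntry n sh ℓ
  entry_pos := by
    intro r c h1 h2 h3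
    rw [TopEntry, if_pos ⟨h1, h2, h3⟩]
    have := colLen_le sh ℓ c
    omega
  entry_le := by
    intro r c h1 h2 h3
    rw [TopEntry, if_pos ⟨h1, h2, h3⟩]
    have := (colLen_iff hanti hbd h1 h2).mp h3
    omega
  row_weak := by
    intro r c h1 h2 h3
    rw [TopEntry, TopEntry, if_pos ⟨h1, h2, by omega⟩, if_pos ⟨h1, by omega, h3⟩]
    have h4 := colLen_anti sh ℓ (show c ≤ c + 1 by omega)
    have h5 := colLen_le sh ℓ c
    omega
  col_strict := by
    intro r c h1 h2 h3 h4
    rw [TopEntry, TopEntry, if_pos ⟨h1, h2, h3⟩, if_pos ⟨by omega, h2, h4⟩]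
    have h5 := colLen_le sh ℓ c
    omega
  zero_outside := by
    intro r c h1
    rw [TopEntry, if_neg (by rintro ⟨a, b, cc⟩; rcases h1 with h | h | h <;> omega)]

lemma acnt_top (hℓn : ℓ ≤ n) (hanti : ∀ i, 1 ≤ i → sh (i+1) ≤ sh i)
    (hbd : ∀ r, ℓ < r → sh r = 0) (T : Tableau n sh) :
    ∀ r, r ≤ n → (∀ r' c, r < r' → T.entry r' c = TopEntry n sh ℓ r' c) →
    ∀ v, 1 ≤ v → v ≤ n + 1 → acnt T v r = sh (n + 2 + r - v) := by
  have H : ∀ d, d ≤ n → (∀ r' c, n - d < r' → T.entry r' c = TopEntry n sh ℓ r' c) →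
      ∀ v, 1 ≤ v → v ≤ n + 1 → acnt T v (n - d) = sh (n + 2 + (n - d) - v) := by
    intro d
    induction d with
    | zero =>
      intro _ _ v hv1 hv2
      rw [Nat.sub_zero, acnt_n, hbd (n + 2 + n - v) (by omega)]
    | succ d ih =>
      intro hd hP v hv1 hv2
      set r := n - (d + 1) with hrdef
      have hrn : r < n := by omega
      have hr1 : r + 1 = n - d := by omega
      rw [acnt_succ T v hrn]
      have hih := ih (by omega) (fun r' c h => hP r' c (by omega)) v hv1 hv2
      rw [← hr1] at hih
      -- evaluate rcnt on row r+1 which equals the top row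
      set L := n + 2 + r - v with hLdef
      have hL1 : r + 1 ≤ L := by omega
      have hrcnt : rcnt T v (r+1) (sh (r+1)) = sh L - sh (L+1) := by
        rw [rcnt_card]
        have hfc : (Finset.Icc 1 (sh (r+1))).filter
            (fun c' => c' ≤ sh (r+1) ∧ T.entry (r+1) c' = v)
            = (Finset.Icc 1 (sh (r+1))).filter (fun c' => colLen sh ℓ c' = L) := by
          apply Finset.filter_congr
          intro c' hc'
          rw [Finset.mem_Icc] at hc'
          rw [hP (r+1) c' (by omega), TopEntry, if_pos ⟨by omega, hc'.1, hc'.2⟩]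
          have h3 := colLen_le sh ℓ c'
          have h4 : r + 1 ≤ colLen sh ℓ c' :=
            (colLen_iff hanti hbd (by omega) hc'.1).mp hc'.2
          constructor
          · rintro ⟨-, h⟩
            omega
          · intro h
            refine ⟨hc'.2, ?_⟩
            omega
        rw [hfc, card_colLen_eq hanti hbd (by omega) (sh_anti hanti (by omega) hL1)]
      rw [hrcnt, hih]
      have hmono : sh (L+1) ≤ sh L := sh_anti hanti (by omega) (by omega)
      have harg : n + 2 + (r+1) - v = L + 1 := by omega
      rw [harg]
      omega
  intro r hrn hP v hv1 hv2
  have := H (n - r) (by omega) (by rw [show n - (n - r) = r by omega]; exact hP) v hv1 hv2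
  rw [show n - (n - r) = r by omega] at this
  exact this

lemma row_eq_top (hℓn : ℓ ≤ n) (hanti : ∀ i, 1 ≤ i → sh (i+1) ≤ sh i)
    (hbd : ∀ r, ℓ < r → sh r = 0) (T : Tableau n sh) {r : ℕ} (hr1 : 1 ≤ r) (hrn : r ≤ n)
    (hP : ∀ r' c, r < r' → T.entry r' c = TopEntry n sh ℓ r' c)
    (hgood : ∀ i, 1 ≤ i → i ≤ n → ∀ m : ℕ,
      ((word n sh T).take m).count i ≤ ((word n sh T).take m).count (i+1)) :
    ∀ c, T.entry r c = TopEntry n sh ℓ r c := by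
  intro c
  by_cases hcsh : 1 ≤ c ∧ c ≤ sh r
  swap
  · rw [T.zero_outside r c (by omega), TopEntry, if_neg (by rintro ⟨a, b, cc⟩; omega)]
  -- pointwise upper bound
  have hub : ∀ c' ∈ Finset.Icc 1 (sh r), T.entry r c' ≤ TopEntry n sh ℓ r c' := by
    intro c' hc'
    rw [Finset.mem_Icc] at hc'
    rw [TopEntry, if_pos ⟨hr1, hc'.1, hc'.2⟩]
    have hclle := colLen_le sh ℓ c'
    by_cases hcc : c' ≤ sh (r+1)
    · have hbelow := hP (r+1) c' (by omega)
      rw [TopEntry, if_pos ⟨by omega, hc'.1, hcc⟩] at hbelow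
      have hcs := T.col_strict r c' hr1 hc'.1 hc'.2 hcc
      rw [hbelow] at hcs
      omega
    · have hnr : ¬ (r + 1 ≤ colLen sh ℓ c') := fun hcon =>
        hcc ((colLen_iff hanti hbd (by omega) hc'.1).mpr hcon)
      have hle := T.entry_le r c' hr1 hc'.1 hc'.2
      omega
  -- per-value cardinality comparison
  have hcard : ∀ v, 1 ≤ v → v ≤ n + 1 →
      ((Finset.Icc 1 (sh r)).filter (fun c' => T.entry r c' = v)).card
      ≤ ((Finset.Icc 1 (sh r)).filter (fun c' => TopEntry n sh ℓ r c' = v)).card := by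
    intro v hv1 hv2
    rcases Nat.lt_or_ge v (n+1) with hvn | hvn
    · by_cases hne : ((Finset.Icc 1 (sh r)).filter (fun c' => T.entry r c' = v)).Nonempty
      swap
      · rw [Finset.not_nonempty_iff_eq_empty] at hne
        rw [hne]
        simp
      · obtain ⟨cm, hcmmem, hcmmax⟩ : ∃ cm ∈ (Finset.Icc 1 (sh r)).filter
            (fun c' => T.entry r c' = v), ∀ x ∈ (Finset.Icc 1 (sh r)).filter
            (fun c' => T.entry r c' = v), x ≤ cm :=
          ⟨_, Finset.max'_mem _ hne, fun x hx => Finset.le_max' _ x hx⟩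
        rw [Finset.mem_filter, Finset.mem_Icc] at hcmmem
        obtain ⟨⟨hcm1, hcmsh⟩, hcmv⟩ := hcmmem
        have hm' : wct T v (off n sh T r + cm) ≤ wct T (v+1) (off n sh T r + cm) :=
          hgood v hv1 (by omega) (off n sh T r + cm)
        rw [wct_split T v hr1 hrn hcmsh, wct_split T (v+1) hr1 hrn hcmsh] at hm'
        have hA1 : acnt T v r = sh (n + 2 + r - v) :=
          acnt_top hℓn hanti hbd T r hrn hP v hv1 (by omega)
        have hA2 : acnt T (v+1) r = sh (n + 1 + r - v) := by
          have := acnt_top hℓn hanti hbd T r hrn hP (v+1) (by omega) (by omega)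
          rw [show n + 2 + r - (v+1) = n + 1 + r - v by omega] at this
          exact this
        have hrc1 : rcnt T v r cm
            = ((Finset.Icc 1 (sh r)).filter (fun c' => T.entry r c' = v)).card := by
          rw [rcnt_card]
          congr 1
          ext c'
          simp only [Finset.mem_filter, Finset.mem_Icc]
          constructor
          · rintro ⟨⟨h1, h2⟩, h3, h4⟩
            exact ⟨⟨h1, h3⟩, h4⟩
          · rintro ⟨⟨h1, h2⟩, h3⟩
            have hle : c' ≤ cm := hcmmax c' (by
              rw [Finset.mem_filter, Finset.mem_Icc]
              exact ⟨⟨h1, h2⟩, h3⟩)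
            exact ⟨⟨h1, hle⟩, h2, h3⟩
        have hrc2 : rcnt T (v+1) r cm = 0 := by
          apply rcnt_zero_of
          intro c' h1 h2 h3 hcon
          have := row_mono T hr1 h1 h2 hcmsh
          rw [hcmv] at this
          omega
        have hcardT : ((Finset.Icc 1 (sh r)).filter
              (fun c' => TopEntry n sh ℓ r c' = v)).card
            = sh (n + 1 + r - v) - sh (n + 2 + r - v) := by
          have hfc : (Finset.Icc 1 (sh r)).filter (fun c' => TopEntry n sh ℓ r c' = v)
              = (Finset.Icc 1 (sh r)).filter
                  (fun c' => colLen sh ℓ c' = n + 1 + r - v) := by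
            apply Finset.filter_congr
            intro c' hc'
            rw [Finset.mem_Icc] at hc'
            rw [TopEntry, if_pos ⟨hr1, hc'.1, hc'.2⟩]
            have h3 := colLen_le sh ℓ c'
            have h4 : r ≤ colLen sh ℓ c' := (colLen_iff hanti hbd hr1 hc'.1).mp hc'.2
            constructor
            · intro h
              omega
            · intro h
              omega
          rw [hfc, card_colLen_eq hanti hbd (by omega)
            (sh_anti hanti hr1 (by omega)),
            show n + 1 + r - v + 1 = n + 2 + r - v by omega]
        omega
    · apply Finset.card_le_card
      intro c' hc'
      rw [Finset.mem_filter] at hc' ⊢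
      obtain ⟨hmem, hval⟩ := hc'
      refine ⟨hmem, ?_⟩
      have h1 := hub c' hmem
      rw [Finset.mem_Icc] at hmem
      rw [TopEntry, if_pos ⟨hr1, hmem.1, hmem.2⟩] at h1 ⊢
      have h4 : r ≤ colLen sh ℓ c' := (colLen_iff hanti hbd hr1 hmem.1).mp hmem.2
      omega
  -- total counts
  have hmapU : ∀ c' ∈ Finset.Icc 1 (sh r), T.entry r c' ∈ Finset.Icc 1 (n+1) := by
    intro c' hc'
    rw [Finset.mem_Icc] at hc'
    rw [Finset.mem_Icc]
    exact ⟨T.entry_pos r c' hr1 hc'.1 hc'.2, T.entry_le r c' hr1 hc'.1 hc'.2⟩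
  have hmapT : ∀ c' ∈ Finset.Icc 1 (sh r), TopEntry n sh ℓ r c' ∈ Finset.Icc 1 (n+1) := by
    intro c' hc'
    rw [Finset.mem_Icc] at hc'
    rw [Finset.mem_Icc, TopEntry, if_pos ⟨hr1, hc'.1, hc'.2⟩]
    have h3 := colLen_le sh ℓ c'
    have h4 : r ≤ colLen sh ℓ c' := (colLen_iff hanti hbd hr1 hc'.1).mp hc'.2
    omega
  have htotU := Finset.card_eq_sum_card_fiberwise hmapU
  have htotT := Finset.card_eq_sum_card_fiberwise hmapT
  have hallEq : ∀ v ∈ Finset.Icc 1 (n+1),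
      ((Finset.Icc 1 (sh r)).filter (fun c' => T.entry r c' = v)).card
      = ((Finset.Icc 1 (sh r)).filter (fun c' => TopEntry n sh ℓ r c' = v)).card := by
    apply (Finset.sum_eq_sum_iff_of_le (fun v hv => by
      rw [Finset.mem_Icc] at hv
      exact hcard v hv.1 hv.2)).mp
    omega
  have hfibU := Finset.sum_fiberwise_of_maps_to hmapU (fun c' => T.entry r c')
  have hfibT := Finset.sum_fiberwise_of_maps_to hmapT (fun c' => TopEntry n sh ℓ r c')
  have hinnerU : ∀ v ∈ Finset.Icc 1 (n+1),
      (∑ c' ∈ (Finset.Icc 1 (sh r)).filter (fun c' => T.entry r c' = v), T.entry r c')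
      = v * ((Finset.Icc 1 (sh r)).filter (fun c' => T.entry r c' = v)).card := by
    intro v _
    rw [Finset.sum_congr rfl (fun c' hc' => (Finset.mem_filter.mp hc').2),
      Finset.sum_const, smul_eq_mul, mul_comm]
  have hinnerT : ∀ v ∈ Finset.Icc 1 (n+1),
      (∑ c' ∈ (Finset.Icc 1 (sh r)).filter (fun c' => TopEntry n sh ℓ r c' = v),
        TopEntry n sh ℓ r c')
      = v * ((Finset.Icc 1 (sh r)).filter (fun c' => TopEntry n sh ℓ r c' = v)).card := by
    intro v _
    rw [Finset.sum_congr rfl (fun c' hc' => (Finset.mem_filter.mp hc').2),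
      Finset.sum_const, smul_eq_mul, mul_comm]
  have hsum : ∑ c' ∈ Finset.Icc 1 (sh r), T.entry r c'
      = ∑ c' ∈ Finset.Icc 1 (sh r), TopEntry n sh ℓ r c' := by
    rw [← hfibU, ← hfibT, Finset.sum_congr rfl hinnerU, Finset.sum_congr rfl hinnerT]
    exact Finset.sum_congr rfl (fun v hv => by rw [hallEq v hv])
  exact (Finset.sum_eq_sum_iff_of_le hub).mp hsum c (by
    rw [Finset.mem_Icc]
    exact hcsh)

lemma eq_top_of_no_bad (hℓn : ℓ ≤ n) (hanti : ∀ i, 1 ≤ i → sh (i+1) ≤ sh i)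
    (hbd : ∀ r, ℓ < r → sh r = 0) (T : Tableau n sh)
    (hgood : ∀ i, 1 ≤ i → i ≤ n → ∀ m : ℕ,
      ((word n sh T).take m).count i ≤ ((word n sh T).take m).count (i+1)) :
    T = Ttop n sh ℓ hℓn hanti hbd := by
  apply tab_ext
  have H : ∀ d, d ≤ n → ∀ r' c, n - d < r' → T.entry r' c = TopEntry n sh ℓ r' c := by
    intro d
    induction d with
    | zero =>
      intro _ r' c hr'
      have hsh0 := hbd r' (by omega)
      rw [T.zero_outside r' c (by omega), TopEntry,
        if_neg (by rintro ⟨a, b, cc⟩; omega)]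
    | succ d ih =>
      intro hd r' c hr'
      rcases Nat.lt_or_ge (n - d) r' with h' | h'
      · exact ih (by omega) r' c h'
      · have hr'eq : r' = n - d := by omega
        exact row_eq_top hℓn hanti hbd T (r := r') (by omega) (by omega)
          (fun r'' c' h => ih (by omega) r'' c' (by omega)) hgood c
  intro r c
  rcases Nat.eq_zero_or_pos r with h | h
  · rw [T.zero_outside r c (by left; omega)]
    show 0 = TopEntry n sh ℓ r c
    rw [TopEntry, if_neg (by rintro ⟨a, b, cc⟩; omega)]
  · exact H n (le_refl n) r c (by omega)

end CPI

namespace CPI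
open List

variable {n : ℕ} {sh : ℕ → ℕ} {ℓ : ℕ}

/-! ### connectivity: every tableau lies below the top tableau -/

lemma le_top (hℓn : ℓ ≤ n) (hanti : ∀ i, 1 ≤ i → sh (i+1) ≤ sh i)
    (hbd : ∀ r, ℓ < r → sh r = 0) (T : Tableau n sh) :
    CrystalLE n sh T (Ttop n sh ℓ hℓn hanti hbd) := by
  suffices H : ∀ k (T : Tableau n sh), (∑ r ∈ Finset.Icc 1 n, (n+1) * sh r) ≤ Phi T + k →
      CrystalLE n sh T (Ttop n sh ℓ hℓn hanti hbd) by
    exact H (∑ r ∈ Finset.Icc 1 n, (n+1) * sh r) T (by omega)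
  intro k
  induction k with
  | zero =>
    intro T hk
    by_cases hT : ∀ i, 1 ≤ i → i ≤ n → ∀ m : ℕ,
        ((word n sh T).take m).count i ≤ ((word n sh T).take m).count (i+1)
    · rw [eq_top_of_no_bad hℓn hanti hbd T hT]
      exact Relation.ReflTransGen.refl
    · push_neg at hT
      obtain ⟨i, hi1, hin, m, hbad⟩ := hT
      obtain ⟨T', _, hph⟩ := exists_cover_of_bad hℓn hbd T hi1 hin ⟨m, by omega⟩
      have := Phi_le T'
      omega
  | succ k ih =>
    intro T hk
    by_cases hT : ∀ i, 1 ≤ i → i ≤ n → ∀ m : ℕ,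
        ((word n sh T).take m).count i ≤ ((word n sh T).take m).count (i+1)
    · rw [eq_top_of_no_bad hℓn hanti hbd T hT]
      exact Relation.ReflTransGen.refl
    · push_neg at hT
      obtain ⟨i, hi1, hin, m, hbad⟩ := hT
      obtain ⟨T', hc, hph⟩ := exists_cover_of_bad hℓn hbd T hi1 hin ⟨m, by omega⟩
      exact Relation.ReflTransGen.head hc (ih T' (by omega))

/-! ### Part 6: the embedding -/

structure Shp (n ℓ t : ℕ) (lam : ℕ → ℕ) : Prop where
  hl1 : 1 ≤ ℓ
  hln : ℓ ≤ n
  hanti : ∀ i, 1 ≤ i → lam (i+1) ≤ lam i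
  hpos : ∀ i, 1 ≤ i → i ≤ ℓ → 1 ≤ lam i
  hbd : ∀ i, ℓ < i → lam i = 0
  ht : t < lam ℓ

namespace Shp

variable {t : ℕ} {lam : ℕ → ℕ}

lemma lam_ge (h : Shp n ℓ t lam) {r : ℕ} (h1 : 1 ≤ r) (h2 : r ≤ ℓ) : t + 1 ≤ lam r := by
  have h3 := h.ht
  have h4 := sh_anti h.hanti h1 h2
  omega

lemma row_le (h : Shp n ℓ t lam) {r : ℕ} (hr : 1 ≤ lam r) : r ≤ ℓ := by
  by_contra hh
  have := h.hbd r (by omega)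
  omega

lemma mu_anti (h : Shp n ℓ t lam) : ∀ i, 1 ≤ i → lam (i+1) - t ≤ lam i - t :=
  fun i hi => by have := h.hanti i hi; omega

lemma mu_bd (h : Shp n ℓ t lam) : ∀ i, ℓ < i → lam i - t = 0 :=
  fun i hi => by have := h.hbd i hi; omega

lemma mu_row_le (h : Shp n ℓ t lam) {r : ℕ} (hr : 1 ≤ lam r - t) : r ≤ ℓ := by
  by_contra hh
  have := h.hbd r (by omega)
  omega

end Shp

def phiEntry (t : ℕ) (lam : ℕ → ℕ) (S : Tableau n (fun i => lam i - t)) (r c : ℕ) : ℕ :=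
  if r = 0 ∨ c = 0 ∨ lam r < c then 0 else if c ≤ t then r else S.entry r (c - t)

def phiT (h : Shp n ℓ t lam) (S : Tableau n (fun i => lam i - t)) : Tableau n lam where
  entry := phiEntry t lam S
  entry_pos := by
    intro r c h1 h2 h3
    rw [phiEntry, if_neg (by omega)]
    split
    · omega
    · exact S.entry_pos r (c - t) h1 (by omega) (by omega)
  entry_le := by
    intro r c h1 h2 h3
    rw [phiEntry, if_neg (by omega)]
    split
    · have h4 : r ≤ ℓ := h.row_le (by omega)
      have h5 := h.hln
      omega
    · exact S.entry_le r (c - t) h1 (by omega) (by omega)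
  row_weak := by
    intro r c h1 h2 h3
    rw [phiEntry, phiEntry, if_neg (show ¬(r = 0 ∨ c = 0 ∨ lam r < c) by omega),
      if_neg (show ¬(r = 0 ∨ c + 1 = 0 ∨ lam r < c + 1) by omega)]
    by_cases hc1 : c + 1 ≤ t
    · rw [if_pos (by omega), if_pos hc1]
    · rw [if_neg hc1]
      by_cases hc2 : c ≤ t
      · rw [if_pos hc2]
        have hceq : c = t := by omega
        have hmu1 : 1 ≤ lam r - t := by omega
        have := entry_ge_row (h.mu_anti) S h1 (show 1 ≤ c + 1 - t by omega)
          (show c + 1 - t ≤ lam r - t by omega)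
        omega
      · rw [if_neg hc2]
        have := S.row_weak r (c - t) h1 (by omega) (show (c - t) + 1 ≤ lam r - t by omega)
        rw [show c + 1 - t = (c - t) + 1 by omega]
        exact this
  col_strict := by
    intro r c h1 h2 h3 h4
    rw [phiEntry, phiEntry, if_neg (show ¬(r = 0 ∨ c = 0 ∨ lam r < c) by omega),
      if_neg (show ¬(r + 1 = 0 ∨ c = 0 ∨ lam (r + 1) < c) by omega)]
    by_cases hc : c ≤ t
    · rw [if_pos hc, if_pos hc]
      omega
    · rw [if_neg hc, if_neg hc]
      exact S.col_strict r (c - t) h1 (by omega) (by omega) (by omega)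
  zero_outside := by
    intro r c h1
    rw [phiEntry, if_pos (by omega)]

lemma phiT_entry_big (h : Shp n ℓ t lam) (S : Tableau n (fun i => lam i - t))
    {r c : ℕ} (hr : 1 ≤ r) (hc : t + 1 ≤ c) :
    (phiT h S).entry r c = S.entry r (c - t) := by
  show phiEntry t lam S r c = _
  rw [phiEntry]
  by_cases hsh : lam r < c
  · rw [if_pos (by omega), (S.zero_outside r (c - t) (by right; right; omega)).symm]
  · rw [if_neg (by omega), if_neg (by omega)]

lemma phiT_entry_small (h : Shp n ℓ t lam) (S : Tableau n (fun i => lam i - t))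
    {r c : ℕ} (hr : 1 ≤ r) (hc1 : 1 ≤ c) (hct : c ≤ t) (hcsh : c ≤ lam r) :
    (phiT h S).entry r c = r := by
  show phiEntry t lam S r c = _
  rw [phiEntry, if_neg (by omega), if_pos hct]

/-! row and prefix count identities for the embedding -/

lemma rcnt_phi (h : Shp n ℓ t lam) (S : Tableau n (fun i => lam i - t)) (v : ℕ)
    {r : ℕ} (hr1 : 1 ≤ r) : ∀ {c : ℕ}, c ≤ lam r →
    rcnt (phiT h S) v r c = (if v = r then min c t else 0) + rcnt S v r (c - t) := by
  intro c
  induction c with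
  | zero =>
    intro _
    rw [rcnt, show (0:ℕ) - t = 0 by omega, rcnt]
    simp
  | succ c ih =>
    intro hc
    have ihc := ih (by omega)
    rw [rcnt, ihc]
    by_cases hct : c + 1 ≤ t
    · have hphe : (phiT h S).entry r (c+1) = r :=
        phiT_entry_small h S hr1 (by omega) hct (by omega)
      rw [show c + 1 - t = 0 by omega]
      rw [show c - t = 0 by omega] at ihc ⊢
      by_cases hv : v = r
      · rw [if_pos (show c + 1 ≤ lam r ∧ (phiT h S).entry r (c+1) = v from
            ⟨hc, by rw [hphe, hv]⟩), if_pos hv, if_pos hv]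
        omega
      · rw [if_neg (show ¬(c + 1 ≤ lam r ∧ (phiT h S).entry r (c+1) = v) from
            fun hh => hv (by have h5 := hh.2; rw [hphe] at h5; exact h5.symm)),
          if_neg hv, if_neg hv]
        omega
    · have hphe : (phiT h S).entry r (c+1) = S.entry r (c + 1 - t) :=
        phiT_entry_big h S hr1 (by omega)
      have hmin : (c+1) ⊓ t = c ⊓ t := by omega
      rw [show c + 1 - t = (c - t) + 1 by omega] at hphe ⊢
      rw [rcnt, hmin]
      have hind : (if c + 1 ≤ lam r ∧ (phiT h S).entry r (c+1) = v then 1 else 0)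
          = (if (c - t) + 1 ≤ lam r - t ∧ S.entry r ((c - t) + 1) = v then 1 else 0) := by
        by_cases hss : S.entry r ((c - t) + 1) = v
        · rw [if_pos ⟨hc, by rw [hphe]; exact hss⟩, if_pos ⟨by omega, hss⟩]
        · rw [if_neg (fun hh => hss (by rw [← hphe]; exact hh.2)),
            if_neg (fun hh => hss hh.2)]
      rw [hind]
      by_cases hv : v = r
      · rw [if_pos hv]
        omega
      · rw [if_neg hv]
        omega

end CPI

namespace CPI
open List

variable {n : ℕ} {sh : ℕ → ℕ} {ℓ t : ℕ} {lam : ℕ → ℕ}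

lemma off_eq_zero (T : Tableau n sh) (h0 : ∀ r', ℓ < r' → sh r' = 0) :
    ∀ r, ℓ ≤ r → r ≤ n → off n sh T r = 0 := by
  have H : ∀ d, d ≤ n → ℓ ≤ n - d → off n sh T (n - d) = 0 := by
    intro d
    induction d with
    | zero =>
      intro _ _
      rw [Nat.sub_zero, off_n]
    | succ d ih =>
      intro hd hl
      have h1 : n - (d+1) < n := by omega
      have h2 : n - (d+1) + 1 = n - d := by omega
      rw [off_succ T h1, h2, ih (by omega) (by omega), h0 (n - d) (by omega)]
  intro r hr hrn
  have := H (n - r) (by omega) (by omega)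
  rwa [show n - (n - r) = r by omega] at this

lemma acnt_phi (h : Shp n ℓ t lam) (S : Tableau n (fun i => lam i - t)) (v : ℕ) :
    ∀ r, r ≤ n →
    acnt (phiT h S) v r = (if r < v ∧ v ≤ ℓ then t else 0) + acnt S v r := by
  have H : ∀ d, d ≤ n → acnt (phiT h S) v (n - d)
      = (if n - d < v ∧ v ≤ ℓ then t else 0) + acnt S v (n - d) := by
    intro d
    induction d with
    | zero =>
      intro _
      have hln := h.hln
      rw [Nat.sub_zero, acnt_n, acnt_n, if_neg (by omega)]
    | succ d ih =>
      intro hd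
      set r := n - (d + 1) with hrdef
      have hrn : r < n := by omega
      have hr1 : r + 1 = n - d := by omega
      have ih' := ih (by omega)
      rw [← hr1] at ih'
      rw [acnt_succ (phiT h S) v hrn, acnt_succ S v hrn, ih',
        rcnt_phi h S v (show 1 ≤ r + 1 by omega) (le_refl (lam (r+1)))]
      have hln := h.hln
      rcases le_or_gt (r + 1) ℓ with hl | hl
      · have hge := h.lam_ge (show 1 ≤ r + 1 by omega) hl
        have hmin : lam (r+1) ⊓ t = t := by omega
        rw [hmin]
        split_ifs <;> omega
      · have h0 : lam (r + 1) = 0 := h.hbd _ hl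
        have hmin : lam (r+1) ⊓ t = 0 := by omega
        rw [hmin]
        split_ifs <;> omega
  intro r hrn
  have := H (n - r) (by omega)
  rwa [show n - (n - r) = r by omega] at this

lemma wphi_split (h : Shp n ℓ t lam) (S : Tableau n (fun i => lam i - t)) (v : ℕ)
    {r c : ℕ} (hr1 : 1 ≤ r) (hrn : r ≤ n) (hc : c ≤ lam r) :
    wct (phiT h S) v (off n lam (phiT h S) r + c)
    = (if r < v ∧ v ≤ ℓ then t else 0) + (if v = r then min c t else 0)
      + wct S v (off n (fun i => lam i - t) S r + (c - t)) := by
  rw [wct_split (phiT h S) v hr1 hrn hc,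
    wct_split S v hr1 hrn (by show c - t ≤ lam r - t; omega),
    acnt_phi h S v r hrn, rcnt_phi h S v hr1 hc]
  omega

end CPI

namespace CPI
open List

variable {n : ℕ} {sh : ℕ → ℕ} {ℓ t : ℕ} {lam : ℕ → ℕ}

lemma word_get_cell (T : Tableau n sh) {r j : ℕ} (hr1 : 1 ≤ r) (hrn : r ≤ n)
    (hj : j < sh r) :
    (word n sh T)[off n sh T r + j]? = some (T.entry r (j+1)) := by
  rw [word_get, rl_get T hr1 hrn hj]
  rfl

lemma wct_def (T : Tableau n sh) (v m : ℕ) :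
    ((word n sh T).take m).count v = wct T v m := rfl

set_option maxHeartbeats 3200000 in
lemma uc_transfer (h : Shp n ℓ t lam) (S : Tableau n (fun i' => lam i' - t))
    {i r₀ c₀ : ℕ} (hi1 : 1 ≤ i) (hr₀1 : 1 ≤ r₀) (hc₀1 : 1 ≤ c₀)
    (hc₀sh : c₀ ≤ lam r₀ - t) (hent : S.entry r₀ c₀ = i) :
    UnmatchedClose i (word n (fun i' => lam i' - t) S)
      (off n (fun i' => lam i' - t) S r₀ + (c₀ - 1))
    ↔ UnmatchedClose i (word n lam (phiT h S))
      (off n lam (phiT h S) r₀ + (t + c₀ - 1)) := by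
  have hln := h.hln
  have hr₀ℓ : r₀ ≤ ℓ := h.mu_row_le (show 1 ≤ lam r₀ - t by omega)
  have hr₀n : r₀ ≤ n := by omega
  have hir₀ : r₀ ≤ i := by
    rw [← hent]
    exact entry_ge_row h.mu_anti S hr₀1 hc₀1 hc₀sh
  have hge := h.lam_ge hr₀1 hr₀ℓ
  have htc₀ : t + c₀ ≤ lam r₀ := by omega
  have hwS : (word n (fun i' => lam i' - t) S)[off n (fun i' => lam i' - t) S r₀ + (c₀ - 1)]?
      = some i := by
    rw [word_get_cell S hr₀1 hr₀n (show c₀ - 1 < lam r₀ - t by omega),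
      show c₀ - 1 + 1 = c₀ by omega, hent]
  have hwφ : (word n lam (phiT h S))[off n lam (phiT h S) r₀ + (t + c₀ - 1)]? = some i := by
    rw [word_get_cell (phiT h S) hr₀1 hr₀n (show t + c₀ - 1 < lam r₀ by omega),
      show t + c₀ - 1 + 1 = t + c₀ by omega,
      phiT_entry_big h S hr₀1 (by omega), show t + c₀ - t = c₀ by omega, hent]
  have hoffr₀φ : off n lam (phiT h S) (r₀ - 1) = off n lam (phiT h S) r₀ + lam r₀ := by
    have := off_succ (phiT h S) (show r₀ - 1 < n by omega)
    rwa [show r₀ - 1 + 1 = r₀ by omega] at this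
  have hoffr₀μ : off n (fun i' => lam i' - t) S (r₀ - 1)
      = off n (fun i' => lam i' - t) S r₀ + (lam r₀ - t) := by
    have := off_succ S (show r₀ - 1 < n by omega)
    rwa [show r₀ - 1 + 1 = r₀ by omega] at this
  constructor
  · -- from the μ-word to the λ-word
    intro hS
    rw [uc_iff] at hS ⊢
    refine ⟨hwφ, ?_⟩
    intro j' hj'
    have hplen : off n lam (phiT h S) r₀ + (t + c₀ - 1) < (word n lam (phiT h S)).length :=
      (List.getElem?_eq_some_iff.mp hwφ).1
    obtain ⟨r₁, c₁, hr₁1, hr₁n, hc₁, hj'eq, -⟩ := decomp (phiT h S) (m := j') (by omega)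
    have hr₁ℓ : r₁ ≤ ℓ := h.row_le (by omega)
    have hger₁ := h.lam_ge hr₁1 hr₁ℓ
    have hr₁ge : r₀ ≤ r₁ := by
      by_contra hcon
      have h1 := off_anti (phiT h S) (show r₁ ≤ r₀ - 1 by omega)
      omega
    have hjle : off n (fun i' => lam i' - t) S r₁ + (c₁ - t)
        ≤ off n (fun i' => lam i' - t) S r₀ + (c₀ - 1) := by
      rcases Nat.eq_or_lt_of_le hr₁ge with heq | hlt
      · rw [← heq]
        have hoffeq : off n lam (phiT h S) r₁ = off n lam (phiT h S) r₀ := by rw [heq]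
        omega
      · have h1 := off_anti S (show r₀ ≤ r₁ - 1 by omega)
        have h2 : off n (fun i' => lam i' - t) S (r₁ - 1)
            = off n (fun i' => lam i' - t) S r₁ + (lam r₁ - t) := by
          have := off_succ S (show r₁ - 1 < n by omega)
          rwa [show r₁ - 1 + 1 = r₁ by omega] at this
        omega
    have hkey := hS.2 (off n (fun i' => lam i' - t) S r₁ + (c₁ - t)) hjle
    rw [show off n (fun i' => lam i' - t) S r₀ + (c₀ - 1) + 1
      = off n (fun i' => lam i' - t) S r₀ + c₀ by omega] at hkey
    rw [show off n lam (phiT h S) r₀ + (t + c₀ - 1) + 1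
      = off n lam (phiT h S) r₀ + (t + c₀) by omega, hj'eq]
    rw [wct_def, wct_def, wct_def, wct_def,
      wphi_split h S (i+1) hr₀1 hr₀n htc₀, wphi_split h S i hr₀1 hr₀n htc₀,
      wphi_split h S (i+1) hr₁1 hr₁n (by omega), wphi_split h S i hr₁1 hr₁n (by omega),
      show t + c₀ - t = c₀ by omega]
    rw [wct_def, wct_def, wct_def, wct_def] at hkey
    have hminlt : min (t + c₀) t = t := by omega
    split_ifs <;> omega
  · -- from the λ-word to the μ-word
    intro hφ
    rw [uc_iff] at hφ ⊢
    refine ⟨hwS, ?_⟩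
    intro j hj
    have hplen : off n (fun i' => lam i' - t) S r₀ + (c₀ - 1)
        < (word n (fun i' => lam i' - t) S).length := (List.getElem?_eq_some_iff.mp hwS).1
    obtain ⟨r₁, c₁, hr₁1, hr₁n, hc₁, hjeq, hminimal⟩ := decomp S (m := j) (by omega)
    have hr₁ℓ : r₁ ≤ ℓ := by
      apply hminimal ℓ
      rw [off_eq_zero S h.mu_bd ℓ (le_refl ℓ) hln]
      omega
    have hger₁ := h.lam_ge hr₁1 hr₁ℓ
    have hr₁ge : r₀ ≤ r₁ := by
      by_contra hcon
      have h1 := off_anti S (show r₁ ≤ r₀ - 1 by omega)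
      omega
    rw [show off n (fun i' => lam i' - t) S r₀ + (c₀ - 1) + 1
      = off n (fun i' => lam i' - t) S r₀ + c₀ by omega]
    rcases Nat.lt_or_ge i r₁ with hcase | hcase
    · -- i < r₁ : segment starting at the beginning of row r₁ of the λ-word
      have hj'le : off n lam (phiT h S) r₁ ≤ off n lam (phiT h S) r₀ + (t + c₀ - 1) := by
        have := off_anti (phiT h S) hr₁ge
        omega
      have hkey := hφ.2 (off n lam (phiT h S) r₁) hj'le
      rw [show off n lam (phiT h S) r₀ + (t + c₀ - 1) + 1
        = off n lam (phiT h S) r₀ + (t + c₀) by omega] at hkey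
      rw [show off n lam (phiT h S) r₁ = off n lam (phiT h S) r₁ + 0 by omega] at hkey
      rw [wct_def, wct_def, wct_def, wct_def,
        wphi_split h S (i+1) hr₀1 hr₀n htc₀, wphi_split h S i hr₀1 hr₀n htc₀,
        wphi_split h S (i+1) hr₁1 hr₁n (by omega), wphi_split h S i hr₁1 hr₁n (by omega),
        show t + c₀ - t = c₀ by omega, show (0:ℕ) - t = 0 by omega] at hkey
      rw [wct_def, wct_def, wct_def, wct_def, hjeq]
      have hsplit1 : ∀ v, wct S v (off n (fun i' => lam i' - t) S r₁ + c₁)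
          = acnt S v r₁ + rcnt S v r₁ c₁ :=
        fun v => wct_split S v hr₁1 hr₁n (by show c₁ ≤ lam r₁ - t; omega)
      have hsplit0 : ∀ v, wct S v (off n (fun i' => lam i' - t) S r₁ + 0)
          = acnt S v r₁ :=
        fun v => by
          rw [wct_split S v hr₁1 hr₁n (by show (0:ℕ) ≤ lam r₁ - t; omega), rcnt]
          omega
      have hrz : rcnt S i r₁ c₁ = 0 := by
        apply rcnt_zero_of
        intro c' h1 h2 h3 hcon
        have := entry_ge_row h.mu_anti S hr₁1 h1 h3
        omega
      have hrmono : rcnt S (i+1) r₁ 0 ≤ rcnt S (i+1) r₁ c₁ := rcnt_mono S (i+1) r₁ (by omega)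
      rw [hsplit1 i, hsplit1 (i+1)]
      rw [hsplit0 i, hsplit0 (i+1)] at hkey
      split_ifs at hkey <;> omega
    · -- r₁ ≤ i : use the corresponding position inside row r₁
      have hcmu : c₁ < lam r₁ - t := hc₁
      have hj'le : off n lam (phiT h S) r₁ + (t + c₁)
          ≤ off n lam (phiT h S) r₀ + (t + c₀ - 1) := by
        rcases Nat.eq_or_lt_of_le hr₁ge with heq | hlt
        · rw [← heq]
          have : c₁ ≤ c₀ - 1 := by
            by_contra hcon
            have hoffeq : off n (fun i' => lam i' - t) S r₁
                = off n (fun i' => lam i' - t) S r₀ := by rw [heq]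
            omega
          omega
        · have h1 := off_anti (phiT h S) (show r₀ ≤ r₁ - 1 by omega)
          have h2 : off n lam (phiT h S) (r₁ - 1)
              = off n lam (phiT h S) r₁ + lam r₁ := by
            have := off_succ (phiT h S) (show r₁ - 1 < n by omega)
            rwa [show r₁ - 1 + 1 = r₁ by omega] at this
          omega
      have hkey := hφ.2 (off n lam (phiT h S) r₁ + (t + c₁)) hj'le
      rw [show off n lam (phiT h S) r₀ + (t + c₀ - 1) + 1
        = off n lam (phiT h S) r₀ + (t + c₀) by omega] at hkey
      rw [wct_def, wct_def, wct_def, wct_def,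
        wphi_split h S (i+1) hr₀1 hr₀n htc₀, wphi_split h S i hr₀1 hr₀n htc₀,
        wphi_split h S (i+1) hr₁1 hr₁n (by omega), wphi_split h S i hr₁1 hr₁n (by omega),
        show t + c₀ - t = c₀ by omega, show t + c₁ - t = c₁ by omega] at hkey
      rw [wct_def, wct_def, wct_def, wct_def, hjeq]
      split_ifs at hkey <;> omega

end CPI

namespace CPI
open List

variable {n : ℕ} {ℓ t : ℕ} {lam : ℕ → ℕ}

lemma rl_some (T : Tableau n sh) {p : ℕ} {i : ℕ}
    (hw : (word n sh T)[p]? = some i) :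
    ∃ r j, 1 ≤ r ∧ r ≤ n ∧ j < sh r ∧ T.entry r (j+1) = i ∧ p = off n sh T r + j := by
  rw [word_get] at hw
  cases hx : (readingList n sh T)[p]? with
  | none => rw [hx] at hw; simp at hw
  | some x =>
    rw [hx] at hw
    simp only [Option.map_some, Option.some.injEq] at hw
    obtain ⟨r, j, h1, h2, h3, h4, h5⟩ := rl_elim T hx
    exact ⟨r, j, h1, h2, h3, by rw [h4] at hw; exact hw, h5⟩

lemma notuc_beyond_up (h : Shp n ℓ t lam) (S : Tableau n (fun i' => lam i' - t))
    {i r₀ c₀ : ℕ} (hi1 : 1 ≤ i) (hr₀1 : 1 ≤ r₀) (hc₀1 : 1 ≤ c₀)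
    (hc₀sh : c₀ ≤ lam r₀ - t) (hent : S.entry r₀ c₀ = i)
    (hmaxS : ∀ q, off n (fun i' => lam i' - t) S r₀ + (c₀ - 1) < q →
      ¬ UnmatchedClose i (word n (fun i' => lam i' - t) S) q) :
    ∀ q', off n lam (phiT h S) r₀ + (t + c₀ - 1) < q' →
      ¬ UnmatchedClose i (word n lam (phiT h S)) q' := by
  intro q' hq' huc
  have hln := h.hln
  have hr₀ℓ : r₀ ≤ ℓ := h.mu_row_le (show 1 ≤ lam r₀ - t by omega)
  have hge := h.lam_ge hr₀1 hr₀ℓ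
  obtain ⟨r₂, j₂, hr₂1, hr₂n, hj₂, hent₂, hq'eq⟩ := rl_some (phiT h S) huc.1
  have hir₀ : r₀ ≤ i := by
    rw [← hent]
    exact entry_ge_row h.mu_anti S hr₀1 hc₀1 hc₀sh
  have hr₂ℓ : r₂ ≤ ℓ := h.row_le (by omega)
  have hger₂ := h.lam_ge hr₂1 hr₂ℓ
  have hr₂le : r₂ ≤ r₀ := by
    by_contra hcon
    have h1 := off_anti (phiT h S) (show r₀ ≤ r₂ - 1 by omega)
    have h2 : off n lam (phiT h S) (r₂ - 1) = off n lam (phiT h S) r₂ + lam r₂ := by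
      have := off_succ (phiT h S) (show r₂ - 1 < n by omega)
      rwa [show r₂ - 1 + 1 = r₂ by omega] at this
    omega
  by_cases hct : j₂ + 1 ≤ t
  · have hsm : (phiT h S).entry r₂ (j₂+1) = r₂ :=
      phiT_entry_small h S hr₂1 (by omega) hct (by omega)
    have : i = r₂ := by omega
    have hreq : r₂ = r₀ := by omega
    rw [hreq] at hq'eq
    omega
  · have hentS : S.entry r₂ (j₂ + 1 - t) = i := by
      rw [← hent₂, phiT_entry_big h S hr₂1 (by omega)]
    have huc' : UnmatchedClose i (word n lam (phiT h S))
        (off n lam (phiT h S) r₂ + (t + (j₂ + 1 - t) - 1)) := by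
      rw [show t + (j₂ + 1 - t) - 1 = j₂ by omega, ← hq'eq]
      exact huc
    have hucS := (uc_transfer h S hi1 hr₂1 (show 1 ≤ j₂ + 1 - t by omega)
      (show j₂ + 1 - t ≤ lam r₂ - t by omega) hentS).mpr huc'
    apply hmaxS (off n (fun i' => lam i' - t) S r₂ + (j₂ + 1 - t - 1)) ?_ hucS
    rcases Nat.eq_or_lt_of_le hr₂le with heq | hlt
    · rw [heq]
      rw [heq] at hq'eq
      omega
    · have h1 := off_anti S (show r₂ ≤ r₀ - 1 by omega)
      have h2 : off n (fun i' => lam i' - t) S (r₀ - 1)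
          = off n (fun i' => lam i' - t) S r₀ + (lam r₀ - t) := by
        have := off_succ S (show r₀ - 1 < n by omega)
        rwa [show r₀ - 1 + 1 = r₀ by omega] at this
      omega

lemma notuc_beyond_down (h : Shp n ℓ t lam) (S : Tableau n (fun i' => lam i' - t))
    {i r₀ c₀ : ℕ} (hi1 : 1 ≤ i) (hr₀1 : 1 ≤ r₀) (hc₀1 : 1 ≤ c₀)
    (hc₀sh : c₀ ≤ lam r₀ - t) (hent : S.entry r₀ c₀ = i)
    (hmaxφ : ∀ q', off n lam (phiT h S) r₀ + (t + c₀ - 1) < q' →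
      ¬ UnmatchedClose i (word n lam (phiT h S)) q') :
    ∀ q, off n (fun i' => lam i' - t) S r₀ + (c₀ - 1) < q →
      ¬ UnmatchedClose i (word n (fun i' => lam i' - t) S) q := by
  intro q hq huc
  have hln := h.hln
  have hr₀ℓ : r₀ ≤ ℓ := h.mu_row_le (show 1 ≤ lam r₀ - t by omega)
  have hge := h.lam_ge hr₀1 hr₀ℓ
  obtain ⟨r₂, j₂, hr₂1, hr₂n, hj₂, hent₂, hqeq⟩ := rl_some S huc.1
  have hr₂ℓ : r₂ ≤ ℓ := h.mu_row_le (by omega)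
  have hger₂ := h.lam_ge hr₂1 hr₂ℓ
  have hr₂le : r₂ ≤ r₀ := by
    by_contra hcon
    have h1 := off_anti S (show r₀ ≤ r₂ - 1 by omega)
    have h2 : off n (fun i' => lam i' - t) S (r₂ - 1)
        = off n (fun i' => lam i' - t) S r₂ + (lam r₂ - t) := by
      have := off_succ S (show r₂ - 1 < n by omega)
      rwa [show r₂ - 1 + 1 = r₂ by omega] at this
    omega
  have huc' : UnmatchedClose i (word n (fun i' => lam i' - t) S)
      (off n (fun i' => lam i' - t) S r₂ + (j₂ + 1 - 1)) := by
    rw [show j₂ + 1 - 1 = j₂ by omega, ← hqeq]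
    exact huc
  have hucφ := (uc_transfer h S hi1 hr₂1 (show 1 ≤ j₂ + 1 by omega) hj₂ hent₂).mp huc'
  apply hmaxφ (off n lam (phiT h S) r₂ + (t + (j₂ + 1) - 1)) ?_ hucφ
  rcases Nat.eq_or_lt_of_le hr₂le with heq | hlt
  · rw [heq]
    rw [heq] at hqeq
    omega
  · have h1 := off_anti (phiT h S) (show r₂ ≤ r₀ - 1 by omega)
    have h2 : off n lam (phiT h S) (r₀ - 1) = off n lam (phiT h S) r₀ + lam r₀ := by
      have := off_succ (phiT h S) (show r₀ - 1 < n by omega)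
      rwa [show r₀ - 1 + 1 = r₀ by omega] at this
    omega

lemma frel_up (h : Shp n ℓ t lam) (S S' : Tableau n (fun i' => lam i' - t)) {i : ℕ}
    (hi1 : 1 ≤ i) (hF : FRel n (fun i' => lam i' - t) i S S') :
    FRel n lam i (phiT h S) (phiT h S') := by
  obtain ⟨p, huc, hmax, rr, cc, hrl, hupd⟩ := hF
  obtain ⟨r, j, hr1, hrn, hj, hx, hpeq⟩ := rl_elim S hrl
  have hxr : rr = r ∧ cc = j + 1 ∧ S.entry r (j+1) = i := by
    have h1 := congrArg Prod.fst (congrArg Prod.fst hx)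
    have h2 := congrArg Prod.snd (congrArg Prod.fst hx)
    have h3 := congrArg Prod.snd hx
    exact ⟨h1, h2, h3.symm⟩
  obtain ⟨rfl, rfl, hent⟩ := hxr
  have hln := h.hln
  have hrℓ : rr ≤ ℓ := h.mu_row_le (by omega)
  have hge := h.lam_ge hr1 hrℓ
  refine ⟨off n lam (phiT h S) rr + (t + (j+1) - 1), ?_, ?_, rr, t + (j+1), ?_, ?_⟩
  · apply (uc_transfer h S hi1 hr1 (by omega) hj hent).mp
    rw [show j + 1 - 1 = j by omega, ← hpeq]
    exact huc
  · apply notuc_beyond_up h S hi1 hr1 (by omega) hj hent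
    intro q hq
    apply hmax
    omega
  · rw [rl_get (phiT h S) hr1 hrn (show t + (j+1) - 1 < lam rr by omega),
      show t + (j + 1) - 1 + 1 = t + (j+1) by omega,
      phiT_entry_big h S hr1 (by omega), show t + (j+1) - t = j + 1 by omega, hent]
  · intro r'' c''
    by_cases hout : r'' = 0 ∨ c'' = 0 ∨ lam r'' < c''
    · rw [if_neg (by rintro ⟨rfl, rfl⟩; omega)]
      show phiEntry t lam S' r'' c'' = phiEntry t lam S r'' c''
      rw [phiEntry, if_pos hout, phiEntry, if_pos hout]
    · by_cases hct : c'' ≤ t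
      · rw [if_neg (by rintro ⟨-, rfl⟩; omega),
          phiT_entry_small h S' (by omega) (by omega) hct (by omega),
          phiT_entry_small h S (by omega) (by omega) hct (by omega)]
      · rw [phiT_entry_big h S' (by omega) (by omega),
          phiT_entry_big h S (by omega) (by omega), hupd r'' (c'' - t)]
        by_cases hcc : r'' = rr ∧ c'' = t + (j + 1)
        · rw [if_pos ⟨hcc.1, by omega⟩, if_pos hcc]
        · rw [if_neg (by rintro ⟨h1, h2⟩; exact hcc ⟨h1, by omega⟩), if_neg hcc]

def shiftT (h : Shp n ℓ t lam) (T : Tableau n lam) : Tableau n (fun i' => lam i' - t) where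
  entry := fun r c' => if r = 0 ∨ c' = 0 then 0 else T.entry r (c' + t)
  entry_pos := by
    intro r c h1 h2 h3
    rw [if_neg (by omega)]
    exact T.entry_pos r (c + t) h1 (by omega) (by omega)
  entry_le := by
    intro r c h1 h2 h3
    rw [if_neg (by omega)]
    exact T.entry_le r (c + t) h1 (by omega) (by omega)
  row_weak := by
    intro r c h1 h2 h3
    rw [if_neg (by omega), if_neg (by omega)]
    have := T.row_weak r (c + t) h1 (by omega) (by omega)
    rwa [show c + t + 1 = c + 1 + t by omega] at this
  col_strict := by
    intro r c h1 h2 h3 h4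
    rw [if_neg (by omega), if_neg (by omega)]
    exact T.col_strict r (c + t) h1 (by omega) (by omega) (by omega)
  zero_outside := by
    intro r c h1
    rcases h1 with h | h | h
    · rw [if_pos (by omega)]
    · rw [if_pos (by omega)]
    · by_cases h0 : r = 0 ∨ c = 0
      · rw [if_pos h0]
      · rw [if_neg h0]
        exact T.zero_outside r (c + t) (by right; right; omega)

lemma frel_down (h : Shp n ℓ t lam) (S' : Tableau n (fun i' => lam i' - t))
    (T : Tableau n lam) {i : ℕ} (hi1 : 1 ≤ i)
    (hF : FRel n lam i T (phiT h S')) :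
    ∃ S : Tableau n (fun i' => lam i' - t),
      T = phiT h S ∧ FRel n (fun i' => lam i' - t) i S S' := by
  obtain ⟨p', huc, hmax, rr, cc, hrl, hupd⟩ := hF
  obtain ⟨r, j, hr1, hrn, hj, hx, hpeq⟩ := rl_elim T hrl
  have hxr : rr = r ∧ cc = j + 1 ∧ T.entry r (j+1) = i := by
    have h1 := congrArg Prod.fst (congrArg Prod.fst hx)
    have h2 := congrArg Prod.snd (congrArg Prod.fst hx)
    have h3 := congrArg Prod.snd hx
    exact ⟨h1, h2, h3.symm⟩
  obtain ⟨rfl, rfl, hent⟩ := hxr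
  have hln := h.hln
  have hrℓ : rr ≤ ℓ := h.row_le (by omega)
  have hge := h.lam_ge hr1 hrℓ
  -- the changed cell is beyond column t
  have hct : t + 1 ≤ j + 1 := by
    by_contra hcon
    have h1 : (phiT h S').entry rr (j+1) = i + 1 := by
      rw [hupd rr (j+1), if_pos ⟨rfl, rfl⟩]
    have h2 : (phiT h S').entry rr (j+1) = rr :=
      phiT_entry_small h S' hr1 (by omega) (by omega) (by omega)
    have hr2 : 2 ≤ rr := by omega
    have hshm : lam rr ≤ lam (rr - 1) := by
      have := sh_anti h.hanti (show 1 ≤ rr - 1 by omega) (show rr - 1 ≤ rr by omega)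
      omega
    have h3 : (phiT h S').entry (rr - 1) (j+1) = rr - 1 :=
      phiT_entry_small h S' (by omega) (by omega) (by omega) (by omega)
    have h4 : T.entry (rr - 1) (j+1) = rr - 1 := by
      have e1 := hupd (rr - 1) (j+1)
      rw [if_neg (by rintro ⟨hh, -⟩; omega)] at e1
      rw [← e1, h3]
    have h5 := T.col_strict (rr - 1) (j+1) (by omega) (by omega) (by omega)
      (by rw [show rr - 1 + 1 = rr by omega]; omega)
    rw [show rr - 1 + 1 = rr by omega] at h5
    omega
  set S := shiftT h T with hSdef
  have hSent : ∀ r'' c'', 1 ≤ r'' → 1 ≤ c'' → S.entry r'' c'' = T.entry r'' (c'' + t) := by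
    intro r'' c'' h1 h2
    show (if r'' = 0 ∨ c'' = 0 then 0 else T.entry r'' (c'' + t)) = _
    rw [if_neg (by omega)]
  have hTeq : T = phiT h S := by
    apply tab_ext
    intro r'' c''
    by_cases hout : r'' = 0 ∨ c'' = 0 ∨ lam r'' < c''
    · rw [T.zero_outside r'' c'' hout]
      show 0 = phiEntry t lam S r'' c''
      rw [phiEntry, if_pos hout]
    · by_cases hct' : c'' ≤ t
      · rw [phiT_entry_small h S (by omega) (by omega) hct' (by omega)]
        have e1 := hupd r'' c''
        rw [if_neg (by rintro ⟨-, rfl⟩; omega)] at e1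
        rw [← e1, phiT_entry_small h S' (by omega) (by omega) hct' (by omega)]
      · rw [phiT_entry_big h S (by omega) (by omega),
          hSent r'' (c'' - t) (by omega) (by omega),
          show c'' - t + t = c'' by omega]
  refine ⟨S, hTeq, off n (fun i' => lam i' - t) S rr + (j + 1 - t - 1), ?_, ?_,
    rr, j + 1 - t, ?_, ?_⟩
  · have hentS : S.entry rr (j + 1 - t) = i := by
      rw [hSent rr (j + 1 - t) hr1 (by omega), show j + 1 - t + t = j + 1 by omega, hent]
    apply (uc_transfer h S hi1 hr1 (by omega) (show j + 1 - t ≤ lam rr - t by omega)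
      hentS).mpr
    rw [show t + (j + 1 - t) - 1 = j by omega]
    rw [hTeq] at huc hpeq
    rw [← hpeq]
    exact huc
  · have hentS : S.entry rr (j + 1 - t) = i := by
      rw [hSent rr (j + 1 - t) hr1 (by omega), show j + 1 - t + t = j + 1 by omega, hent]
    apply notuc_beyond_down h S hi1 hr1 (by omega)
      (show j + 1 - t ≤ lam rr - t by omega) hentS
    intro q' hq'
    rw [show t + (j + 1 - t) - 1 = j by omega] at hq'
    rw [hTeq] at hmax hpeq
    apply hmax
    omega
  · rw [rl_get S hr1 hrn (show j + 1 - t - 1 < lam rr - t by omega),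
      show j + 1 - t - 1 + 1 = j + 1 - t by omega,
      hSent rr (j + 1 - t) hr1 (by omega), show j + 1 - t + t = j + 1 by omega, hent]
  · intro r'' c''
    by_cases h0 : r'' = 0 ∨ c'' = 0
    · rw [if_neg (by rintro ⟨rfl, rfl⟩; omega)]
      have hz1 : S'.entry r'' c'' = 0 := S'.zero_outside r'' c'' (by omega)
      have hz2 : S.entry r'' c'' = 0 := S.zero_outside r'' c'' (by omega)
      rw [hz1, hz2]
    · have e1 : (phiT h S').entry r'' (c'' + t) = S'.entry r'' c'' := by
        rw [phiT_entry_big h S' (by omega) (by omega), show c'' + t - t = c'' by omega]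
      rw [← e1, hupd r'' (c'' + t)]
      by_cases hcc : r'' = rr ∧ c'' = j + 1 - t
      · rw [if_pos ⟨hcc.1, by omega⟩, if_pos hcc]
      · rw [if_neg (by rintro ⟨h1, h2⟩; exact hcc ⟨h1, by omega⟩), if_neg hcc,
          hSent r'' c'' (by omega) (by omega)]

end CPI

namespace CPI
open List

variable {n : ℕ} {ℓ t : ℕ} {lam : ℕ → ℕ}

lemma cover_up (h : Shp n ℓ t lam) {S S' : Tableau n (fun i' => lam i' - t)}
    (hc : CrystalCover n (fun i' => lam i' - t) S S') :
    CrystalCover n lam (phiT h S) (phiT h S') := by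
  obtain ⟨i, hi1, hin, hF⟩ := hc
  exact ⟨i, hi1, hin, frel_up h S S' hi1 hF⟩

lemma cover_down (h : Shp n ℓ t lam) {S' : Tableau n (fun i' => lam i' - t)}
    {T : Tableau n lam} (hc : CrystalCover n lam T (phiT h S')) :
    ∃ S, T = phiT h S ∧ CrystalCover n (fun i' => lam i' - t) S S' := by
  obtain ⟨i, hi1, hin, hF⟩ := hc
  obtain ⟨S, hTeq, hF'⟩ := frel_down h S' T hi1 hF
  exact ⟨S, hTeq, i, hi1, hin, hF'⟩

lemma le_up (h : Shp n ℓ t lam) {S S' : Tableau n (fun i' => lam i' - t)}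
    (hle : CrystalLE n (fun i' => lam i' - t) S S') :
    CrystalLE n lam (phiT h S) (phiT h S') := by
  induction hle with
  | refl => exact Relation.ReflTransGen.refl
  | tail _ hc ih => exact Relation.ReflTransGen.tail ih (cover_up h hc)

lemma le_down (h : Shp n ℓ t lam) {S' : Tableau n (fun i' => lam i' - t)}
    {X : Tableau n lam} (hle : CrystalLE n lam X (phiT h S')) :
    ∃ S₀, X = phiT h S₀ ∧ CrystalLE n (fun i' => lam i' - t) S₀ S' := by
  induction hle using Relation.ReflTransGen.head_induction_on with
  | refl => exact ⟨S', rfl, Relation.ReflTransGen.refl⟩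
  | head hc _ ih =>
    obtain ⟨S₁, rfl, hS₁⟩ := ih
    obtain ⟨S₀, rfl, hc'⟩ := cover_down h hc
    exact ⟨S₀, rfl, Relation.ReflTransGen.head hc' hS₁⟩

lemma phi_inj (h : Shp n ℓ t lam) : Function.Injective (phiT h) := by
  intro S₁ S₂ heq
  apply tab_ext
  intro r c
  rcases Nat.eq_zero_or_pos r with hr | hr
  · rw [S₁.zero_outside r c (by left; omega), S₂.zero_outside r c (by left; omega)]
  rcases Nat.eq_zero_or_pos c with hc | hc
  · rw [S₁.zero_outside r c (by right; left; omega), S₂.zero_outside r c (by right; left; omega)]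
  by_cases hsh : c ≤ lam r - t
  · have h1 : (phiT h S₁).entry r (c + t) = S₁.entry r c := by
      rw [phiT_entry_big h S₁ (by omega) (by omega), show c + t - t = c by omega]
    have h2 : (phiT h S₂).entry r (c + t) = S₂.entry r c := by
      rw [phiT_entry_big h S₂ (by omega) (by omega), show c + t - t = c by omega]
    rw [← h1, ← h2, heq]
  · rw [S₁.zero_outside r c (by right; right; omega),
      S₂.zero_outside r c (by right; right; omega)]

lemma le_iff (h : Shp n ℓ t lam) (S S' : Tableau n (fun i' => lam i' - t)) :
    CrystalLE n (fun i' => lam i' - t) S S' ↔ CrystalLE n lam (phiT h S) (phiT h S') := by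
  constructor
  · exact le_up h
  · intro hle
    obtain ⟨S₀, heq, hle'⟩ := le_down h hle
    rwa [phi_inj h heq]

end CPI

/-- If `μ = (λ₁−t, …, λ_ℓ−t)` is obtained from a partition `λ` with `ℓ`
parts by deleting the first `t` columns (`0 ≤ t < λ_ℓ`) and `n ≥ ℓ`, then `B_μ^n` is
order-isomorphic to a principal order ideal of `B_λ^n`; in particular, if `B_μ^n` is not
a lattice then neither is `B_λ^n`. -/
theorem delete_columns_principal_ideal (n ℓ t : ℕ) (hℓ : 1 ≤ ℓ) (hℓn : ℓ ≤ n)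
    (lam : ℕ → ℕ)
    (hanti : ∀ i, 1 ≤ i → lam (i + 1) ≤ lam i)
    (hpos : ∀ i, 1 ≤ i → i ≤ ℓ → 1 ≤ lam i)
    (hbd : ∀ i, ℓ < i → lam i = 0)
    (ht : t < lam ℓ) :
    (∃ (X : Tableau n lam) (φ : Tableau n (fun i => lam i - t) → Tableau n lam),
      Function.Injective φ ∧
      Set.range φ = {T : Tableau n lam | CrystalLE n lam T X} ∧
      (∀ S S', CrystalLE n (fun i => lam i - t) S S' ↔ CrystalLE n lam (φ S) (φ S'))) ∧
    (¬ IsCrystalLattice n (fun i => lam i - t) → ¬ IsCrystalLattice n lam) := by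
  have h : CPI.Shp n ℓ t lam := ⟨hℓ, hℓn, hanti, hpos, hbd, ht⟩
  have hμanti := h.mu_anti
  have hμbd := h.mu_bd
  set Stop : Tableau n (fun i' => lam i' - t) :=
    CPI.Ttop n (fun i' => lam i' - t) ℓ hℓn hμanti hμbd with hStop
  constructor
  · refine ⟨CPI.phiT h Stop, CPI.phiT h, CPI.phi_inj h, ?_, fun S S' => CPI.le_iff h S S'⟩
    ext T
    constructor
    · rintro ⟨S, rfl⟩
      exact CPI.le_up h (CPI.le_top hℓn hμanti hμbd S)
    · intro hT
      obtain ⟨S₀, rfl, -⟩ := CPI.le_down h hT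
      exact ⟨S₀, rfl⟩
  · intro hnμ hlat
    apply hnμ
    intro S₁ S₂
    obtain ⟨⟨M, hM1, hM2, hMg⟩, ⟨J, hJ1, hJ2, hJl⟩⟩ := hlat (CPI.phiT h S₁) (CPI.phiT h S₂)
    constructor
    · obtain ⟨M₀, rfl, hM01⟩ := CPI.le_down h hM1
      have hM02 : CrystalLE n (fun i' => lam i' - t) M₀ S₂ := (CPI.le_iff h M₀ S₂).mpr hM2
      refine ⟨M₀, hM01, hM02, fun X hX1 hX2 => ?_⟩
      exact (CPI.le_iff h X M₀).mpr (hMg (CPI.phiT h X) ((CPI.le_iff h X S₁).mp hX1)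
        ((CPI.le_iff h X S₂).mp hX2))
    · have hJX : CrystalLE n lam J (CPI.phiT h Stop) :=
        hJl (CPI.phiT h Stop) (CPI.le_up h (CPI.le_top hℓn hμanti hμbd S₁))
          (CPI.le_up h (CPI.le_top hℓn hμanti hμbd S₂))
      obtain ⟨J₀, rfl, -⟩ := CPI.le_down h hJX
      refine ⟨J₀, (CPI.le_iff h S₁ J₀).mpr hJ1, (CPI.le_iff h S₂ J₀).mpr hJ2,
        fun X hX1 hX2 => ?_⟩
      exact (CPI.le_iff h J₀ X).mpr (hJl (CPI.phiT h X) ((CPI.le_iff h S₁ X).mp hX1)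
        ((CPI.le_iff h S₂ X).mp hX2))
end
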